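/- arXiv:1108.1048 — 7 statements merged into one kernel-verified Lean document; each statement's English description precedes it below -/
import Mathlib

section
/- Let n ≥ 1 and let the triangular array {t_{i,j}} lie in S^λ (type A_n). Then the sum of the leftmost entries of all rows satisfies Σ_{k=1}^{n} t_{k,n+1−k} ≤ n·(λ_1 + λ_2 + ⋯ + λ_n). -/
/-!
Write `c_{i,j} = ∑_{k=i}^n t_{k,j}`. Then `t_{k,n+1-k} = c_{k,n+1-k} - c_{k+1,n+1-k}` telescopes
along the antidiagonal into `∑_k (c_{k,n+1-k} - c_{k,n+2-k})`, since `c_{1,n+1} = c_{n+1,1} = 0`.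
Each horizontal difference `c_{i,j} - c_{i,j+1}` is, by the defining inequality of `S^λ`, at most
`λ_j` plus the difference one step down the diagonal, `c_{i+1,j-1} - c_{i+1,j}`; following the
diagonal to the bottom row bounds it by `λ_{i+j-n} + ⋯ + λ_j ≤ λ_1 + ⋯ + λ_n`.
-/

open Finset

/-- The paper's `c(t_{i,j})`. -/
def colSum (n : ℕ) (t : ℕ → ℕ → ℤ) (i j : ℕ) : ℤ :=
  ∑ k ∈ Icc i n, t k j

section colSum

variable {n : ℕ} {t : ℕ → ℕ → ℤ} {i j : ℕ}

theorem colSum_eq_add_colSum_succ (hi : i ≤ n) :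
    colSum n t i j = t i j + colSum n t (i + 1) j := by
  rw [colSum, Icc_eq_cons_Ioc hi, sum_cons, ← Icc_add_one_left_eq_Ioc, colSum]

theorem colSum_of_lt (hi : n < i) : colSum n t i j = 0 := by
  rw [colSum, Icc_eq_empty (by omega), sum_empty]

theorem colSum_sub_colSum_succ_le {lam : ℕ → ℤ}
    (hineq : ∀ i j, 1 ≤ i → i ≤ n → n + 1 - i ≤ j → j ≤ n →
      t i j ≤ lam j + colSum n t (i + 1) (j - 1) - 2 * colSum n t (i + 1) j
        + colSum n t i (j + 1))
    (hi₁ : 1 ≤ i) (hi : i ≤ n + 1) (hj₁ : n + 1 - i ≤ j) (hj : j ≤ n) :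
    colSum n t i j - colSum n t i (j + 1) ≤ ∑ l ∈ Icc (i + j - n) j, lam l := by
  obtain ⟨d, hd⟩ : ∃ d, i + d = n + 1 := ⟨n + 1 - i, by omega⟩
  induction d generalizing i j with
  | zero =>
    rw [colSum_of_lt (by omega), colSum_of_lt (by omega), Icc_eq_empty (by omega), sum_empty,
      sub_zero]
  | succ d ih =>
    have hj_succ : j - 1 + 1 = j := by omega
    have hdiag := ih (i := i + 1) (j := j - 1) (by omega) (by omega) (by omega) (by omega)
      (by omega)
    rw [hj_succ, show i + 1 + (j - 1) - n = i + j - n by omega] at hdiag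
    have hsum :
        ∑ l ∈ Icc (i + j - n) j, lam l = ∑ l ∈ Icc (i + j - n) (j - 1), lam l + lam j := by
      conv_lhs => rw [← hj_succ]
      rw [sum_Icc_succ_top (by omega), hj_succ]
    have hrow := hineq i j hi₁ (by omega) hj₁ hj
    have hsplit : colSum n t i j = t i j + colSum n t (i + 1) j :=
      colSum_eq_add_colSum_succ (by omega)
    linarith

theorem sum_antidiagonal_eq_sum_colSum_sub (hcorner : colSum n t 1 (n + 1) = 0) :
    ∑ k ∈ Icc 1 n, t k (n + 1 - k) =
      ∑ k ∈ Icc 1 n, (colSum n t k (n + 1 - k) - colSum n t k (n + 1 - k + 1)) := by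
  set g : ℕ → ℤ := fun k => colSum n t k (n + 2 - k)
  have hterm : ∀ k ∈ Icc 1 n, t k (n + 1 - k) =
      (colSum n t k (n + 1 - k) - colSum n t k (n + 1 - k + 1)) - (g (k + 1) - g k) := by
    intro k hk
    have hk := mem_Icc.mp hk
    simp only [g, show n + 2 - (k + 1) = n + 1 - k by omega,
      show n + 2 - k = n + 1 - k + 1 by omega,
      colSum_eq_add_colSum_succ (t := t) (j := n + 1 - k) hk.2]
    ring
  have htelescope : ∑ k ∈ Icc 1 n, (g (k + 1) - g k) = 0 := by
    rw [← Ico_add_one_right_eq_Icc, sum_Ico_sub g (by omega)]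
    simp only [g, colSum_of_lt (lt_add_one n), show n + 2 - 1 = n + 1 by omega, hcorner, sub_zero]
  rw [sum_congr rfl hterm, sum_sub_distrib, htelescope, sub_zero]

end colSum

theorem adapted_string_leftmost_sum_bound_typeA_general
    (n : ℕ) (lam : ℕ → ℤ) (t : ℕ → ℕ → ℤ)
    (hlam : ∀ j, 1 ≤ j → j ≤ n → 0 ≤ lam j)
    (hsupp : ∀ i j, ¬(1 ≤ i ∧ i ≤ n ∧ n + 1 - i ≤ j ∧ j ≤ n) → t i j = 0)
    (hineq : ∀ i j, 1 ≤ i → i ≤ n → n + 1 - i ≤ j → j ≤ n →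
      t i j ≤ lam j + (∑ k ∈ Icc (i + 1) n, t k (j - 1))
        - 2 * (∑ k ∈ Icc (i + 1) n, t k j)
        + (∑ k ∈ Icc i n, t k (j + 1))) :
    (∑ k ∈ Icc 1 n, t k (n + 1 - k)) ≤ (n : ℤ) * ∑ j ∈ Icc 1 n, lam j := by
  have hcorner : colSum n t 1 (n + 1) = 0 := sum_eq_zero fun k _ => hsupp k (n + 1) (by omega)
  rw [sum_antidiagonal_eq_sum_colSum_sub hcorner]
  calc _ ≤ ∑ _k ∈ Icc 1 n, ∑ l ∈ Icc 1 n, lam l := by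
        refine sum_le_sum fun k hk => ?_
        have hk := mem_Icc.mp hk
        refine (colSum_sub_colSum_succ_le hineq hk.1 (by omega) (by omega) (by omega)).trans ?_
        refine sum_le_sum_of_subset_of_nonneg (Icc_subset_Icc (by omega) (by omega)) ?_
        exact fun l hl _ => hlam l (mem_Icc.mp hl).1 (mem_Icc.mp hl).2
    _ = n * ∑ j ∈ Icc 1 n, lam j := by simp

/-- Type A_n case of Proposition 3.6: for a triangular array `t` in `S^λ`
(type A_n), the sum of the leftmost entries of all rows is bounded by
`n * (λ_1 + ⋯ + λ_n)`.  Here `c(t_{i,j}) = ∑_{k=i}^n t_{k,j}` is written out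
explicitly as a sum. -/
theorem adapted_string_leftmost_sum_bound_typeA
    (n : ℕ) (hn : 1 ≤ n) (lam : ℕ → ℤ) (t : ℕ → ℕ → ℤ)
    (hlam : ∀ j, 1 ≤ j → j ≤ n → 0 ≤ lam j)
    (ht : ∀ i j, 0 ≤ t i j)
    (hsupp : ∀ i j, ¬(1 ≤ i ∧ i ≤ n ∧ n + 1 - i ≤ j ∧ j ≤ n) → t i j = 0)
    (hmono : ∀ i j, 1 ≤ i → i ≤ n → n + 1 - i ≤ j → j < n →
      t i (j + 1) ≤ t i j)
    (hineq : ∀ i j, 1 ≤ i → i ≤ n → n + 1 - i ≤ j → j ≤ n →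
      t i j ≤ lam j + (∑ k ∈ Icc (i + 1) n, t k (j - 1))
        - 2 * (∑ k ∈ Icc (i + 1) n, t k j)
        + (∑ k ∈ Icc i n, t k (j + 1))) :
    (∑ k ∈ Icc 1 n, t k (n + 1 - k)) ≤ (n : ℤ) * ∑ j ∈ Icc 1 n, lam j :=
  adapted_string_leftmost_sum_bound_typeA_general n lam t hlam hsupp hineq
end

section
/- Let n ≥ 2 and let the triangular array {t_{i,j}} lie in S^λ (type B_n). Then the sum of the leftmost entries of all rows satisfies Σ_{k=1}^{n} t_{k,n+1−k} ≤ n·(2λ_1 + 2λ_2 + ⋯ + 2λ_{n−1} + λ_n). -/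
/-!
Read the array backwards, from the end of row `n` to the start of row `1`, and follow the weight
`μ = λ - ∑ t_{k,l} α_{k,l}` of the entries read so far, where column `l` carries the simple root
`α_l` for `l ≤ n` and `α_{2n-l}` for `l > n`. In coordinates with `α_m = ε_m - ε_{m+1}` (`m < n`)
and `α_n = ε_n`, the inequalities (b) and (c) for the next entry `t`, of root `α`, say exactly
`t ≤ ⟨μ, α^∨⟩`. For `m < n`, reading `t` replaces `μ_m, μ_{m+1}` by `μ_m - t, μ_{m+1} + t`, both
still in `[μ_{m+1}, μ_m]`; for `α_n` it replaces `μ_n` by `μ_n - t ∈ [-μ_n, μ_n]`. So every `|μ_m|`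
stays below `μ_1(λ) = λ(h)/2`, whence `t ≤ ⟨μ, α^∨⟩ ≤ λ(h)` for every entry.
-/

open Finset

/-- The function `c` of the paper for type B_n:
`c(t_{i,j}) = ∑_{k=i}^n (t_{k,j} + t_{k,2n−j})` for `j < n`,
`c(t_{i,n}) = ∑_{k=i}^n t_{k,n}`, and
`c(t_{i,j}) = t_{i,j} + ∑_{k=i+1}^n (t_{k,2n−j} + t_{k,j})` for `j > n`. -/
def cB (n : ℕ) (t : ℕ → ℕ → ℤ) (i j : ℕ) : ℤ :=
  if j < n then ∑ k ∈ Finset.Icc i n, (t k j + t k (2 * n - j))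
  else if j = n then ∑ k ∈ Finset.Icc i n, t k n
  else t i j + ∑ k ∈ Finset.Icc (i + 1) n, (t k (2 * n - j) + t k j)

namespace AdaptedStringB

section Definitions

variable (n : ℕ) (t : ℕ → ℕ → ℤ)

def colSum (i j : ℕ) : ℤ := ∑ k ∈ Icc i n, t k j

/-- The coefficient of `α_m` in the weight of the entries `t i l` with `l ≥ p` and of the rows
`i + 1, …, n`: their sum over the columns `m` and `2n - m`. -/
def suffixLoad (i p m : ℕ) : ℤ :=
  (if p ≤ m then t i m else 0) + (if p ≤ 2 * n - m ∧ m < n then t i (2 * n - m) else 0) +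
    colSum n t (i + 1) m + (if m < n then colSum n t (i + 1) (2 * n - m) else 0)

/-- Twice the `ε_m`-coordinate of `λ` (doubled to stay integral). -/
def lamCoord (lam : ℕ → ℤ) (m : ℕ) : ℤ := (∑ j ∈ Icc m (n - 1), 2 * lam j) + lam n

/-- Twice the `ε_m`-coordinate of `λ` minus the weight counted by `suffixLoad n t i p`. -/
def epsCoord (lam : ℕ → ℤ) (i p m : ℕ) : ℤ :=
  lamCoord n lam m - 2 * suffixLoad n t i p m + 2 * suffixLoad n t i p (m - 1)

def SupportedOnTriangle : Prop :=
  ∀ i j, ¬(1 ≤ i ∧ i ≤ n ∧ n + 1 - i ≤ j ∧ j ≤ n - 1 + i) → t i j = 0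

def CoordsBounded (L : ℤ) (ν : ℕ → ℤ) : Prop := ∀ m, 1 ≤ m → m ≤ n → |ν m| ≤ L

/-- Conditions (b) and (c) in the definition of `S^λ`. -/
def StringIneqs (lam : ℕ → ℤ) : Prop :=
  (∀ i j, 1 ≤ i → i ≤ n → n + 1 - i ≤ j → j < n →
    t i j ≤ lam j + cB n t i (j + 1) - 2 * cB n t i (2 * n - j) + cB n t i (2 * n + 1 - j)) ∧
  (∀ i j, 1 ≤ i → i ≤ n → n + 1 - i ≤ j → j < n →
    t i (2 * n - j) ≤ lam j + cB n t (i + 1) (j + 1) - 2 * cB n t (i + 1) j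
      + cB n t i (2 * n + 1 - j)) ∧
  (∀ i, 1 ≤ i → i ≤ n → t i n ≤ lam n + 2 * cB n t i (n + 1) - 2 * cB n t (i + 1) n)

end Definitions

variable {n : ℕ} {t : ℕ → ℕ → ℤ} {lam : ℕ → ℤ} {i j p m : ℕ}

lemma colSum_eq_add (j : ℕ) (h : i ≤ n) : colSum n t i j = t i j + colSum n t (i + 1) j := by
  rw [colSum, colSum, ← add_sum_Ioc_eq_sum_Icc h, Icc_add_one_left_eq_Ioc]

lemma cB_of_lt (i : ℕ) {j : ℕ} (h : j < n) :
    cB n t i j = colSum n t i j + colSum n t i (2 * n - j) := by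
  simp only [cB, if_pos h, colSum, sum_add_distrib]

lemma cB_self (i : ℕ) : cB n t i n = colSum n t i n := by
  simp [cB, colSum]

lemma cB_of_gt (i : ℕ) {j : ℕ} (h : n < j) :
    cB n t i j = t i j + colSum n t (i + 1) (2 * n - j) + colSum n t (i + 1) j := by
  simp only [cB, colSum, sum_add_distrib, if_neg (show ¬j < n by omega),
    if_neg (show j ≠ n by omega), add_assoc]

lemma suffixLoad_eq_cB_of_le (hi : i ≤ n) (hpm : p ≤ m) (hm : m ≤ n) :
    suffixLoad n t i p m = cB n t i m := by
  rcases hm.lt_or_eq with hm | rfl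
  · rw [cB_of_lt i hm, colSum_eq_add m hi, colSum_eq_add (2 * n - m) hi, suffixLoad,
      if_pos hpm, if_pos ⟨by omega, hm⟩, if_pos hm]
    ring
  · rw [cB_self, colSum_eq_add m hi, suffixLoad, if_pos hpm, if_neg (by omega), if_neg (by omega)]
    ring

lemma suffixLoad_eq_cB_of_lt_of_le (hm : m < n) (hmp : m < p) (hp : p ≤ 2 * n - m) :
    suffixLoad n t i p m = cB n t i (2 * n - m) := by
  rw [cB_of_gt i (by omega), Nat.sub_sub_self (by omega), suffixLoad, if_neg (by omega),
    if_pos ⟨hp, hm⟩, if_pos hm]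
  ring

lemma suffixLoad_eq_cB_succ (hm : m ≤ n) (hp : 2 * n - m < p) :
    suffixLoad n t i p m = cB n t (i + 1) m := by
  rcases hm.lt_or_eq with hm | rfl
  · rw [cB_of_lt _ hm, suffixLoad, if_neg (by omega), if_neg (by omega), if_pos hm]
    ring
  · rw [cB_self, suffixLoad, if_neg (by omega), if_neg (by omega), if_neg (by omega)]
    ring

lemma suffixLoad_eq_add {a : ℕ} (ha : 1 ≤ a) (han : a ≤ n) (hpa : p = a ∨ a < n ∧ p = 2 * n - a)
    (hm : m ≤ n) :
    suffixLoad n t i p m = suffixLoad n t i (p + 1) m + if m = a then t i p else 0 := by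
  rcases hpa with rfl | ⟨hlt, rfl⟩ <;>
  · simp only [suffixLoad]
    split_ifs <;> first | omega | ring1 | (subst_vars; ring1)

lemma epsCoord_eq_sub_add {a : ℕ} (ha : 1 ≤ a) (han : a ≤ n)
    (hpa : p = a ∨ a < n ∧ p = 2 * n - a) (hm : m ≤ n) :
    epsCoord n t lam i p m = epsCoord n t lam i (p + 1) m - (if m = a then 2 * t i p else 0)
      + (if m = a + 1 then 2 * t i p else 0) := by
  simp only [epsCoord, suffixLoad_eq_add ha han hpa hm,
    suffixLoad_eq_add ha han hpa ((m.sub_le 1).trans hm)]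
  split_ifs <;> omega

lemma lamCoord_eq_add (hm : m < n) : lamCoord n lam m = 2 * lam m + lamCoord n lam (m + 1) := by
  rw [lamCoord, lamCoord, ← add_sum_Ioc_eq_sum_Icc (by omega), Icc_add_one_left_eq_Ioc, add_assoc]

lemma lamCoord_self (hn : 1 ≤ n) : lamCoord n lam n = lam n := by
  simp [lamCoord, Icc_eq_empty (show ¬n ≤ n - 1 by omega)]

lemma abs_lamCoord_le (hlam : ∀ j, 1 ≤ j → j ≤ n → 0 ≤ lam j) (hm : 1 ≤ m) (hmn : m ≤ n) :
    |lamCoord n lam m| ≤ lamCoord n lam 1 := by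
  have hsum : ∀ j ∈ Icc 1 (n - 1), 0 ≤ 2 * lam j := fun j hj => by
    obtain ⟨hj₁, hj₂⟩ := mem_Icc.mp hj
    linarith [hlam j hj₁ (by omega)]
  have h₀ : 0 ≤ ∑ j ∈ Icc m (n - 1), 2 * lam j :=
    sum_nonneg fun j hj => hsum j (Icc_subset_Icc_left hm hj)
  have h₁ : ∑ j ∈ Icc m (n - 1), 2 * lam j ≤ ∑ j ∈ Icc 1 (n - 1), 2 * lam j :=
    sum_le_sum_of_subset_of_nonneg (Icc_subset_Icc_left hm) fun j hj _ => hsum j hj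
  rw [abs_le, lamCoord, lamCoord]
  constructor <;> linarith [hlam n (hm.trans hmn) le_rfl]

lemma epsCoord_gap_of_lt (hi : i ≤ n) (hp : 1 ≤ p) (hpn : p < n) :
    epsCoord n t lam i (p + 1) p - epsCoord n t lam i (p + 1) (p + 1) =
      2 * (lam p + cB n t i (p + 1) - 2 * cB n t i (2 * n - p) + cB n t i (2 * n + 1 - p)) := by
  have h₀ : suffixLoad n t i (p + 1) (p - 1) = cB n t i (2 * n + 1 - p) := by
    rw [suffixLoad_eq_cB_of_lt_of_le (by omega) (by omega) (by omega)]
    congr 1; omega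
  simp only [epsCoord, Nat.add_sub_cancel, h₀, lamCoord_eq_add hpn,
    suffixLoad_eq_cB_of_lt_of_le hpn (Nat.lt_succ_self p) (by omega),
    suffixLoad_eq_cB_of_le hi le_rfl hpn]
  ring

lemma epsCoord_middle (hi : 1 ≤ i) (hin : i ≤ n) :
    epsCoord n t lam i (n + 1) n = lam n + 2 * cB n t i (n + 1) - 2 * cB n t (i + 1) n := by
  have h₀ : suffixLoad n t i (n + 1) (n - 1) = cB n t i (n + 1) := by
    rw [suffixLoad_eq_cB_of_lt_of_le (by omega) (by omega) (by omega)]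
    congr 1; omega
  rw [epsCoord, h₀, suffixLoad_eq_cB_succ le_rfl (by omega), lamCoord_self (hi.trans hin)]
  ring

lemma epsCoord_gap_of_gt (hj : 1 ≤ j) (hjn : j < n) :
    epsCoord n t lam i (2 * n + 1 - j) j - epsCoord n t lam i (2 * n + 1 - j) (j + 1) =
      2 * (lam j + cB n t (i + 1) (j + 1) - 2 * cB n t (i + 1) j + cB n t i (2 * n + 1 - j)) := by
  have h₀ : suffixLoad n t i (2 * n + 1 - j) (j - 1) = cB n t i (2 * n + 1 - j) := by
    rw [suffixLoad_eq_cB_of_lt_of_le (by omega) (by omega) (by omega)]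
    congr 1; omega
  have h₁ : suffixLoad n t i (2 * n + 1 - j) j = cB n t (i + 1) j :=
    suffixLoad_eq_cB_succ hjn.le (by omega)
  have h₂ : suffixLoad n t i (2 * n + 1 - j) (j + 1) = cB n t (i + 1) (j + 1) :=
    suffixLoad_eq_cB_succ hjn (by omega)
  simp only [epsCoord, Nat.add_sub_cancel, h₀, h₁, h₂, lamCoord_eq_add hjn]
  ring

lemma suffixLoad_rowEnd (hsupp : SupportedOnTriangle n t) (hin : i + 1 ≤ n) (hm : m ≤ n) :
    suffixLoad n t i (n + i) m = suffixLoad n t (i + 1) (n - i) m := by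
  have h₁ : n + i ≤ m → t i m = 0 := fun h => hsupp i m (by omega)
  have h₂ : n + i ≤ 2 * n - m → t i (2 * n - m) = 0 := fun h => hsupp i _ (by omega)
  have h₃ : m < n - i → t (i + 1) m = 0 := fun h => hsupp (i + 1) m (by omega)
  simp only [suffixLoad, colSum_eq_add m hin, colSum_eq_add (2 * n - m) hin]
  split_ifs <;> omega

lemma suffixLoad_lastRowEnd (hsupp : SupportedOnTriangle n t) (hn : 1 ≤ n) (hm : m ≤ n) :
    suffixLoad n t n (2 * n) m = 0 := by
  have hlast : 2 * n ≤ 2 * n - m → t n (2 * n - m) = 0 := fun h => hsupp n _ (by omega)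
  simp only [suffixLoad, colSum, Icc_eq_empty (show ¬n + 1 ≤ n by omega), sum_empty]
  split_ifs <;> omega

lemma epsCoord_rowEnd (hsupp : SupportedOnTriangle n t) (hin : i + 1 ≤ n) (hm : 1 ≤ m)
    (hmn : m ≤ n) :
    epsCoord n t lam i (n + i) m = epsCoord n t lam (i + 1) (n - i) m := by
  rw [epsCoord, epsCoord, suffixLoad_rowEnd hsupp hin hmn, suffixLoad_rowEnd hsupp hin (by omega)]

lemma epsCoord_lastRowEnd (hsupp : SupportedOnTriangle n t) (hm : 1 ≤ m) (hmn : m ≤ n) :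
    epsCoord n t lam n (2 * n) m = lamCoord n lam m := by
  rw [epsCoord, suffixLoad_lastRowEnd hsupp (by omega) hmn,
    suffixLoad_lastRowEnd hsupp (by omega) (by omega)]
  ring

lemma CoordsBounded.exchange {L s : ℤ} {ν ν' : ℕ → ℤ} {a : ℕ} (hν : CoordsBounded n L ν)
    (ha : 1 ≤ a) (han : a < n) (hs : 0 ≤ s) (hsν : s ≤ ν a - ν (a + 1))
    (hν' : ∀ m, m ≤ n → ν' m = ν m - (if m = a then s else 0) + (if m = a + 1 then s else 0)) :
    CoordsBounded n L ν' ∧ s ≤ 2 * L := by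
  have hx := abs_le.mp (hν a ha han.le)
  have hy := abs_le.mp (hν (a + 1) (by omega) han)
  refine ⟨fun m hm hmn => ?_, by linarith⟩
  have hz := abs_le.mp (hν m hm hmn)
  rw [hν' m hmn, abs_le]
  split_ifs <;> first | omega | (subst_vars; constructor <;> linarith)

lemma CoordsBounded.reflect {L s : ℤ} {ν ν' : ℕ → ℤ} (hν : CoordsBounded n L ν) (hn : 1 ≤ n)
    (hs : 0 ≤ s) (hsν : s ≤ 2 * ν n)
    (hν' : ∀ m, m ≤ n → ν' m = ν m - if m = n then s else 0) :
    CoordsBounded n L ν' ∧ s ≤ 2 * L := by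
  have hx := abs_le.mp (hν n hn le_rfl)
  refine ⟨fun m hm hmn => ?_, by linarith⟩
  have hz := abs_le.mp (hν m hm hmn)
  rw [hν' m hmn, abs_le]
  split_ifs <;> first | omega | (subst_vars; constructor <;> linarith)

lemma coordsBounded_epsCoord_of_succ {L : ℤ} (hS : StringIneqs n t lam) (ht : ∀ i j, 0 ≤ t i j)
    (hi : 1 ≤ i) (hin : i ≤ n) (hp : n + 1 - i ≤ p) (hp' : p ≤ n - 1 + i)
    (hν : CoordsBounded n L (epsCoord n t lam i (p + 1))) :
    CoordsBounded n L (epsCoord n t lam i p) ∧ t i p ≤ L := by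
  have hs := ht i p
  obtain ⟨hS₁, hS₂, hS₃⟩ := hS
  rcases lt_trichotomy p n with hpn | hpn | hpn
  · have hgap := epsCoord_gap_of_lt (t := t) (lam := lam) hin (by omega) hpn
    have hineq := hS₁ i p hi hin hp hpn
    obtain ⟨hbdd, hle⟩ := hν.exchange (by omega) hpn (by omega) (by linarith)
      fun m hm => epsCoord_eq_sub_add (by omega) hpn.le (.inl rfl) hm
    exact ⟨hbdd, by linarith⟩
  · subst p
    have hineq := hS₃ i hi hin
    rw [← epsCoord_middle (t := t) hi hin] at hineq
    obtain ⟨hbdd, hle⟩ := hν.reflect (s := 2 * t i n) (by omega) (by omega) (by linarith)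
      fun m hm => by
        simpa [show m ≠ n + 1 by omega] using epsCoord_eq_sub_add (by omega) le_rfl (.inl rfl) hm
    exact ⟨hbdd, by linarith⟩
  · obtain ⟨j, rfl⟩ : ∃ j, p = 2 * n - j := ⟨2 * n - p, by omega⟩
    have hgap := epsCoord_gap_of_gt (t := t) (lam := lam) (i := i) (show 1 ≤ j by omega)
      (show j < n by omega)
    have hineq := hS₂ i j hi hin (by omega) (by omega)
    rw [show 2 * n + 1 - j = 2 * n - j + 1 by omega] at hgap hineq
    obtain ⟨hbdd, hle⟩ := hν.exchange (by omega) (show j < n by omega) (by omega) (by linarith)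
      fun m hm => epsCoord_eq_sub_add (by omega) (by omega) (.inr ⟨by omega, rfl⟩) hm
    exact ⟨hbdd, by linarith⟩

lemma coordsBounded_epsCoord_of_rowEnd {L : ℤ} (hS : StringIneqs n t lam)
    (ht : ∀ i j, 0 ≤ t i j) (hi : 1 ≤ i) (hin : i ≤ n)
    (hend : CoordsBounded n L (epsCoord n t lam i (n + i)))
    (hp : n + 1 - i ≤ p) (hp' : p ≤ n + i) :
    CoordsBounded n L (epsCoord n t lam i p) := by
  induction hp' using Nat.decreasingInduction with
  | self => exact hend
  | of_succ p hlt ih =>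
    exact (coordsBounded_epsCoord_of_succ hS ht hi hin hp (by omega) (ih (by omega))).1

lemma coordsBounded_epsCoord_rowEnd (hlam : ∀ j, 1 ≤ j → j ≤ n → 0 ≤ lam j)
    (hsupp : SupportedOnTriangle n t) (hS : StringIneqs n t lam) (ht : ∀ i j, 0 ≤ t i j)
    (hi : 1 ≤ i) (hin : i ≤ n) :
    CoordsBounded n (lamCoord n lam 1) (epsCoord n t lam i (n + i)) := by
  induction hin using Nat.decreasingInduction with
  | self =>
    intro m hm hmn
    rw [← two_mul, epsCoord_lastRowEnd hsupp hm hmn]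
    exact abs_lamCoord_le hlam hm hmn
  | of_succ i hlt ih =>
    have hnext := coordsBounded_epsCoord_of_rowEnd hS ht (by omega) hlt (ih (by omega))
      (p := n - i) (by omega) (by omega)
    intro m hm hmn
    rw [epsCoord_rowEnd hsupp hlt hm hmn]
    exact hnext m hm hmn

lemma le_lamCoord_one (hlam : ∀ j, 1 ≤ j → j ≤ n → 0 ≤ lam j)
    (hsupp : SupportedOnTriangle n t) (hS : StringIneqs n t lam) (ht : ∀ i j, 0 ≤ t i j)
    (hi : 1 ≤ i) (hin : i ≤ n) (hp : n + 1 - i ≤ p) (hp' : p ≤ n - 1 + i) :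
    t i p ≤ lamCoord n lam 1 :=
  (coordsBounded_epsCoord_of_succ hS ht hi hin hp hp' <|
    coordsBounded_epsCoord_of_rowEnd hS ht hi hin
      (coordsBounded_epsCoord_rowEnd hlam hsupp hS ht hi hin) (by omega) (by omega)).2

end AdaptedStringB

open AdaptedStringB in
theorem adapted_string_leftmost_sum_bound_typeB_general
    (n : ℕ) (lam : ℕ → ℤ) (t : ℕ → ℕ → ℤ)
    (hlam : ∀ j, 1 ≤ j → j ≤ n → 0 ≤ lam j)
    (ht : ∀ i j, 0 ≤ t i j)
    (hsupp : ∀ i j, ¬(1 ≤ i ∧ i ≤ n ∧ n + 1 - i ≤ j ∧ j ≤ n - 1 + i) → t i j = 0)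
    (hineq₁ : ∀ i j, 1 ≤ i → i ≤ n → n + 1 - i ≤ j → j < n →
      t i j ≤ lam j + cB n t i (j + 1) - 2 * cB n t i (2 * n - j)
        + cB n t i (2 * n + 1 - j))
    (hineq₂ : ∀ i j, 1 ≤ i → i ≤ n → n + 1 - i ≤ j → j < n →
      t i (2 * n - j) ≤ lam j + cB n t (i + 1) (j + 1) - 2 * cB n t (i + 1) j
        + cB n t i (2 * n + 1 - j))
    (hineq₃ : ∀ i, 1 ≤ i → i ≤ n →
      t i n ≤ lam n + 2 * cB n t i (n + 1) - 2 * cB n t (i + 1) n) :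
    (∑ k ∈ Icc 1 n, t k (n + 1 - k)) ≤
      (n : ℤ) * ((∑ j ∈ Icc 1 (n - 1), 2 * lam j) + lam n) := by
  have hentry : ∀ k ∈ Icc 1 n, t k (n + 1 - k) ≤ lamCoord n lam 1 := fun k hk => by
    obtain ⟨hk, hkn⟩ := mem_Icc.mp hk
    exact le_lamCoord_one hlam hsupp ⟨hineq₁, hineq₂, hineq₃⟩ ht hk hkn le_rfl (by omega)
  simpa [lamCoord] using sum_le_card_nsmul _ _ _ hentry

/-- Type B_n case of Proposition 3.6: for a triangular array `t` in `S^λ`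
(type B_n), the sum of the leftmost entries of all rows is bounded by
`n * (2λ_1 + ⋯ + 2λ_{n−1} + λ_n)`. -/
theorem adapted_string_leftmost_sum_bound_typeB
    (n : ℕ) (hn : 2 ≤ n) (lam : ℕ → ℤ) (t : ℕ → ℕ → ℤ)
    (hlam : ∀ j, 1 ≤ j → j ≤ n → 0 ≤ lam j)
    (ht : ∀ i j, 0 ≤ t i j)
    (hsupp : ∀ i j, ¬(1 ≤ i ∧ i ≤ n ∧ n + 1 - i ≤ j ∧ j ≤ n - 1 + i) → t i j = 0)
    (hmono₁ : ∀ i j, 1 ≤ i → i ≤ n → n + 1 - i ≤ j → j + 1 ≤ n - 1 →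
      2 * t i (j + 1) ≤ 2 * t i j)
    (hmono₂ : ∀ i, 2 ≤ i → i ≤ n → t i n ≤ 2 * t i (n - 1))
    (hmono₃ : ∀ i, 2 ≤ i → i ≤ n → 2 * t i (n + 1) ≤ t i n)
    (hmono₄ : ∀ i j, 1 ≤ i → i ≤ n → n + 1 ≤ j → j + 1 ≤ n - 1 + i →
      2 * t i (j + 1) ≤ 2 * t i j)
    (hineq₁ : ∀ i j, 1 ≤ i → i ≤ n → n + 1 - i ≤ j → j < n →
      t i j ≤ lam j + cB n t i (j + 1) - 2 * cB n t i (2 * n - j)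
        + cB n t i (2 * n + 1 - j))
    (hineq₂ : ∀ i j, 1 ≤ i → i ≤ n → n + 1 - i ≤ j → j < n →
      t i (2 * n - j) ≤ lam j + cB n t (i + 1) (j + 1) - 2 * cB n t (i + 1) j
        + cB n t i (2 * n + 1 - j))
    (hineq₃ : ∀ i, 1 ≤ i → i ≤ n →
      t i n ≤ lam n + 2 * cB n t i (n + 1) - 2 * cB n t (i + 1) n) :
    (∑ k ∈ Icc 1 n, t k (n + 1 - k)) ≤
      (n : ℤ) * ((∑ j ∈ Icc 1 (n - 1), 2 * lam j) + lam n) :=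
  adapted_string_leftmost_sum_bound_typeB_general n lam t hlam ht hsupp hineq₁ hineq₂ hineq₃
end

section
/- Let n ≥ 2 and let the triangular array {t_{i,j}} lie in S^λ (type C_n). Then the sum of the leftmost entries of all rows satisfies Σ_{k=1}^{n} t_{k,n+1−k} ≤ 2n·(λ_1 + λ_2 + ⋯ + λ_n). -/
open Finset

/-- The function `c` of the paper for type C_n:
`c(t_{i,j}) = ∑_{k=i}^n (t_{k,j} + t_{k,2n−j})` for `j < n`,
`c(t_{i,n}) = ∑_{k=i}^n 2 t_{k,n}`, and
`c(t_{i,j}) = t_{i,j} + ∑_{k=i+1}^n (t_{k,2n−j} + t_{k,j})` for `j > n`. -/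
def cC (n : ℕ) (t : ℕ → ℕ → ℤ) (i j : ℕ) : ℤ :=
  if j < n then ∑ k ∈ Finset.Icc i n, (t k j + t k (2 * n - j))
  else if j = n then ∑ k ∈ Finset.Icc i n, 2 * t k n
  else t i j + ∑ k ∈ Finset.Icc (i + 1) n, (t k (2 * n - j) + t k j)

private lemma sum_Icc_split (f : ℕ → ℤ) (a b c : ℕ) (h1 : a ≤ b + 1) (h2 : b ≤ c) :
    ∑ k ∈ Icc a c, f k = (∑ k ∈ Icc a b, f k) + ∑ k ∈ Icc (b + 1) c, f k := by
  have hd : Disjoint (Icc a b) (Icc (b + 1) c) := by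
    rw [Finset.disjoint_left]
    intro x hx hx2
    simp only [Finset.mem_Icc] at hx hx2
    omega
  rw [← Finset.sum_union hd]
  congr 1
  apply Finset.ext
  intro x
  simp only [Finset.mem_Icc, Finset.mem_union]
  omega

private lemma sum_Icc_bot (f : ℕ → ℤ) {a b : ℕ} (h : a ≤ b) :
    ∑ k ∈ Icc a b, f k = f a + ∑ k ∈ Icc (a + 1) b, f k := by
  rw [sum_Icc_split f a a b (by omega) h, Finset.Icc_self, Finset.sum_singleton]

private lemma cC_F1 (n : ℕ) (t : ℕ → ℕ → ℤ) {i j : ℕ} (hi : i ≤ n) (hj : j < n) :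
    cC n t i j = t i j + cC n t i (2 * n - j) := by
  unfold cC
  have h1 : ¬ (2 * n - j < n) := by omega
  have h2 : ¬ (2 * n - j = n) := by omega
  have h3 : 2 * n - (2 * n - j) = j := by omega
  rw [if_pos hj, if_neg h1, if_neg h2, h3,
    sum_Icc_bot (fun k => t k j + t k (2 * n - j)) hi]
  ring

private lemma cC_F2 (n : ℕ) (t : ℕ → ℕ → ℤ) {i j : ℕ} (hj : j < n) :
    cC n t i (2 * n - j) = t i (2 * n - j) + cC n t (i + 1) j := by
  unfold cC
  have h1 : ¬ (2 * n - j < n) := by omega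
  have h2 : ¬ (2 * n - j = n) := by omega
  have h3 : 2 * n - (2 * n - j) = j := by omega
  rw [if_neg h1, if_neg h2, h3, if_pos hj]

private lemma cC_Fn (n : ℕ) (t : ℕ → ℕ → ℤ) {i : ℕ} (hi : i ≤ n) :
    cC n t i n = 2 * t i n + cC n t (i + 1) n := by
  have hform : ∀ m, cC n t m n = ∑ k ∈ Icc m n, 2 * t k n := by
    intro m
    unfold cC
    rw [if_neg (lt_irrefl n), if_pos rfl]
  rw [hform, hform, sum_Icc_bot (fun k => 2 * t k n) hi]

/-- Type C_n case of Proposition 3.6: for a triangular array `t` in `S^λ`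
(type C_n), the sum of the leftmost entries of all rows is bounded by
`2n * (λ_1 + ⋯ + λ_n)`. -/
theorem adapted_string_leftmost_sum_bound_typeC
    (n : ℕ) (hn : 2 ≤ n) (lam : ℕ → ℤ) (t : ℕ → ℕ → ℤ)
    (hlam : ∀ j, 1 ≤ j → j ≤ n → 0 ≤ lam j)
    (ht : ∀ i j, 0 ≤ t i j)
    (hsupp : ∀ i j, ¬(1 ≤ i ∧ i ≤ n ∧ n + 1 - i ≤ j ∧ j ≤ n - 1 + i) → t i j = 0)
    (hmono : ∀ i j, 1 ≤ i → i ≤ n → n + 1 - i ≤ j → j + 1 ≤ n - 1 + i →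
      t i (j + 1) ≤ t i j)
    (hineq₁ : ∀ i j, 1 ≤ i → i ≤ n → n + 1 - i ≤ j → j < n →
      t i j ≤ lam j + cC n t i (j + 1) - 2 * cC n t i (2 * n - j)
        + cC n t i (2 * n + 1 - j))
    (hineq₂ : ∀ i j, 1 ≤ i → i ≤ n → n + 1 - i ≤ j → j < n →
      t i (2 * n - j) ≤ lam j + cC n t (i + 1) (j + 1) - 2 * cC n t (i + 1) j
        + cC n t i (2 * n + 1 - j))
    (hineq₃ : ∀ i, 1 ≤ i → i ≤ n →
      t i n ≤ lam n + cC n t i (n + 1) - cC n t (i + 1) n) :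
    (∑ k ∈ Icc 1 n, t k (n + 1 - k)) ≤
      2 * (n : ℤ) * ∑ j ∈ Icc 1 n, lam j := by
  -- The telescoped version of hineq₁ over a row (Sum1)
  have Sum1 : ∀ i, 1 ≤ i → i ≤ n → ∀ d, ∀ j0, j0 + d = n → n + 1 - i ≤ j0 →
      cC n t i j0 ≤ (∑ j ∈ Icc j0 (n - 1), lam j) + cC n t i (n + d + 1)
        - cC n t i (n + 1) + cC n t i n := by
    intro i hi1 hi2 d
    induction d with
    | zero =>
      intro j0 hsum hj0
      have hj : j0 = n := by omega
      rw [hj]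
      rw [Finset.Icc_eq_empty (by omega), Finset.sum_empty]
      have e : n + 0 + 1 = n + 1 := by omega
      rw [e]
      linarith
    | succ d ih =>
      intro j0 hsum hj0
      have hj0n : j0 < n := by omega
      have h1 := hineq₁ i j0 hi1 hi2 hj0 hj0n
      have hF1 := cC_F1 n t hi2 hj0n
      have e1 : 2 * n - j0 = n + d + 1 := by omega
      have e2 : 2 * n + 1 - j0 = n + d + 2 := by omega
      rw [e1] at hF1
      rw [e1, e2] at h1
      have h2 := ih (j0 + 1) (by omega) (by omega)
      have hsplit : ∑ j ∈ Icc j0 (n - 1), lam j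
          = lam j0 + ∑ j ∈ Icc (j0 + 1) (n - 1), lam j :=
        sum_Icc_bot lam (by omega)
      have e3 : n + (d + 1) + 1 = n + d + 2 := by omega
      rw [e3, hsplit]
      linarith
  -- The telescoped version of hineq₂ over a row (Sum2)
  have Sum2 : ∀ i, 1 ≤ i → i ≤ n → ∀ d, ∀ j0, j0 + d = n → n + 1 - i ≤ j0 →
      cC n t i (n + 1) ≤ (∑ j ∈ Icc j0 (n - 1), lam j) + cC n t i (n + d + 1)
        + cC n t (i + 1) n - cC n t (i + 1) j0 := by
    intro i hi1 hi2 d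
    induction d with
    | zero =>
      intro j0 hsum hj0
      have hj : j0 = n := by omega
      rw [hj]
      rw [Finset.Icc_eq_empty (by omega), Finset.sum_empty]
      have e : n + 0 + 1 = n + 1 := by omega
      rw [e]
      linarith
    | succ d ih =>
      intro j0 hsum hj0
      have hj0n : j0 < n := by omega
      have h1 := hineq₂ i j0 hi1 hi2 hj0 hj0n
      have hF2 := cC_F2 n t (i := i) hj0n
      have e1 : 2 * n - j0 = n + d + 1 := by omega
      have e2 : 2 * n + 1 - j0 = n + d + 2 := by omega
      rw [e1] at hF2
      rw [e1, e2] at h1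
      have h2 := ih (j0 + 1) (by omega) (by omega)
      have hsplit : ∑ j ∈ Icc j0 (n - 1), lam j
          = lam j0 + ∑ j ∈ Icc (j0 + 1) (n - 1), lam j :=
        sum_Icc_bot lam (by omega)
      have e3 : n + (d + 1) + 1 = n + d + 2 := by omega
      rw [e3, hsplit]
      linarith
  -- The H-lemma: difference of cC at the two leftmost columns of a row
  have Hlem : ∀ m, ∀ i, i + m = n + 1 → 2 ≤ i →
      cC n t i m - cC n t i (m + 1) ≤ ∑ j ∈ Icc 1 m, lam j := by
    intro m
    induction m with
    | zero =>
      intro i hsum hi2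
      have hz : ∀ j, j < n → cC n t (n + 1) j = 0 := by
        intro j hj
        unfold cC
        rw [if_pos hj, Finset.Icc_eq_empty (by omega), Finset.sum_empty]
      have hi : i = n + 1 := by omega
      subst hi
      rw [hz 0 (by omega), hz 1 (by omega), Finset.Icc_eq_empty (by omega),
        Finset.sum_empty]
      norm_num
    | succ m ih =>
      intro i hsum hi2
      have hi2n : i ≤ n := by omega
      have hm1n : m + 1 < n := by omega
      have h1 := hineq₁ i (m + 1) (by omega) hi2n (by omega) hm1n
      have e2 : 2 * n + 1 - (m + 1) = 2 * n - m := by omega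
      rw [e2] at h1
      have hF1 := cC_F1 n t hi2n hm1n
      have hF2 := cC_F2 n t (i := i) hm1n
      have hF2' := cC_F2 n t (i := i) (j := m) (by omega)
      have hz : t i (2 * n - m) = 0 := hsupp i (2 * n - m) (by omega)
      have hih := ih (i + 1) (by omega) (by omega)
      have hnn := ht i (2 * n - (m + 1))
      have hsplit : ∑ j ∈ Icc 1 (m + 1), lam j
          = (∑ j ∈ Icc 1 m, lam j) + lam (m + 1) := by
        rw [sum_Icc_split lam 1 m (m + 1) (by omega) (by omega), Finset.Icc_self,
          Finset.sum_singleton]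
      rw [hsplit]
      linarith
  -- nonnegativity of the total weight sum
  have hM : 0 ≤ ∑ j ∈ Icc 1 n, lam j := by
    apply Finset.sum_nonneg
    intro j hj
    rw [Finset.mem_Icc] at hj
    exact hlam j hj.1 hj.2
  -- per-row bound
  have hrow : ∀ k, 1 ≤ k → k ≤ n →
      t k (n + 1 - k) ≤ 2 * ∑ j ∈ Icc 1 n, lam j := by
    intro i hi1 hi2
    rcases Nat.lt_or_ge i 2 with hi | hi
    · -- i = 1
      have hi' : i = 1 := by omega
      subst hi'
      have e0 : n + 1 - 1 = n := by omega
      rw [e0]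
      have h3 := hineq₃ 1 (by omega) (by omega)
      have hF2 := cC_F2 n t (i := 1) (j := n - 1) (by omega)
      have e1 : 2 * n - (n - 1) = n + 1 := by omega
      rw [e1] at hF2
      have hz : t 1 (n + 1) = 0 := hsupp 1 (n + 1) (by omega)
      have hH := Hlem (n - 1) 2 (by omega) (by omega)
      have e2 : n - 1 + 1 = n := by omega
      rw [e2] at hH
      have hMsplit : ∑ j ∈ Icc 1 n, lam j
          = (∑ j ∈ Icc 1 (n - 1), lam j) + lam n := by
        rw [sum_Icc_split lam 1 (n - 1) n (by omega) (by omega), e2,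
          Finset.Icc_self, Finset.sum_singleton]
      linarith
    · -- 2 ≤ i ≤ n
      have hj0n : n + 1 - i < n := by omega
      -- t i (n+1-i) ≤ cC i (n+1-i) - cC (i+1) (n+1-i)
      have hF1 := cC_F1 n t hi2 hj0n
      have hF2 := cC_F2 n t (i := i) hj0n
      have hnn := ht i (2 * n - (n + 1 - i))
      -- Sum1 with d = i - 1
      have hS1 := Sum1 i (by omega) hi2 (i - 1) (n + 1 - i) (by omega) (by omega)
      have eni : n + (i - 1) + 1 = n + i := by omega
      rw [eni] at hS1
      -- hineq₃ and Fn
      have h3 := hineq₃ i (by omega) hi2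
      have hFn := cC_Fn n t hi2
      -- Sum2 with d = i - 1
      have hS2 := Sum2 i (by omega) hi2 (i - 1) (n + 1 - i) (by omega) (by omega)
      rw [eni] at hS2
      -- cC i (n+i) = cC (i+1) (n-i)
      have hE := cC_F2 n t (i := i) (j := n - i) (by omega)
      have e3 : 2 * n - (n - i) = n + i := by omega
      rw [e3] at hE
      have hz : t i (n + i) = 0 := hsupp i (n + i) (by omega)
      -- H-lemma at row i+1
      have hH := Hlem (n - i) (i + 1) (by omega) (by omega)
      have e4 : n - i + 1 = n + 1 - i := by omega
      rw [e4] at hH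
      -- split of the total sum
      have hMsplit : ∑ j ∈ Icc 1 n, lam j
          = (∑ j ∈ Icc 1 (n - i), lam j)
            + (∑ j ∈ Icc (n + 1 - i) (n - 1), lam j) + lam n := by
        rw [sum_Icc_split lam 1 (n - 1) n (by omega) (by omega)]
        have e5 : n - 1 + 1 = n := by omega
        rw [e5, Finset.Icc_self, Finset.sum_singleton,
          sum_Icc_split lam 1 (n - i) (n - 1) (by omega) (by omega), e4]
      linarith
  -- conclude
  have hsum : (∑ k ∈ Icc 1 n, t k (n + 1 - k))
      ≤ ∑ _k ∈ Icc 1 n, 2 * ∑ j ∈ Icc 1 n, lam j := by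
    apply Finset.sum_le_sum
    intro k hk
    rw [Finset.mem_Icc] at hk
    exact hrow k hk.1 hk.2
  calc (∑ k ∈ Icc 1 n, t k (n + 1 - k))
      ≤ ∑ _k ∈ Icc 1 n, 2 * ∑ j ∈ Icc 1 n, lam j := hsum
    _ = (n : ℤ) * (2 * ∑ j ∈ Icc 1 n, lam j) := by
        rw [Finset.sum_const, Nat.card_Icc]
        simp only [nsmul_eq_mul]
        norm_num
    _ = 2 * (n : ℤ) * ∑ j ∈ Icc 1 n, lam j := by ring
end

section
/- Let n ≥ 3 and let the triangular array {t_{i,j}} lie in S^λ (type D_n). Then t_{1,n−1} + t_{1,n} + Σ_{i=2}^{n−1} t_{i,n−i} ≤ n·(2λ_1 + 2λ_2 + ⋯ + 2λ_{n−2} + λ_{n−1} + λ_n). -/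
open Finset

/-- The function `c` of the paper for type D_n:
`c(t_{i,j}) = ∑_{k=i}^{n−1} (t_{k,j} + t_{k,2n−1−j})` for `j < n−1`,
`c(t_{i,n−1}) = c(t_{i,n}) = ∑_{k=i}^{n−1} (t_{k,n−1} + t_{k,n})`, and
`c(t_{i,j}) = t_{i,j} + ∑_{k=i+1}^{n−1} (t_{k,2n−1−j} + t_{k,j})` for `j > n`. -/
def cD (n : ℕ) (t : ℕ → ℕ → ℤ) (i j : ℕ) : ℤ :=
  if j < n - 1 then ∑ k ∈ Finset.Icc i (n - 1), (t k j + t k (2 * n - 1 - j))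
  else if j = n - 1 ∨ j = n then ∑ k ∈ Finset.Icc i (n - 1), (t k (n - 1) + t k n)
  else t i j + ∑ k ∈ Finset.Icc (i + 1) (n - 1), (t k (2 * n - 1 - j) + t k j)

namespace AdaptedD

/-- interval indicator -/
def ind (a b r : ℕ) : ℤ := if a ≤ r ∧ r ≤ b then 1 else 0

/-- family of positive coroots of `D_n` used in the invariant -/
def Ga (n : ℕ) (γ : ℕ → ℤ) : Prop :=
  (∃ a b, 1 ≤ a ∧ a ≤ b ∧ b ≤ n - 1 ∧ γ = fun r => ind a b r) ∨
  (∃ a, 1 ≤ a ∧ a ≤ n - 1 ∧ γ = fun r => ind a (n-2) r + ind n n r) ∨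
  (∃ a b, 1 ≤ a ∧ a < b ∧ b ≤ n - 1 ∧
    γ = fun r => ind a (n-1) r + ind b (n-2) r + ind n n r)

/-- sum of `c` over the Dynkin-diagram neighbours of `u` in type `D_n` -/
def nbs (n : ℕ) (c : ℕ → ℤ) (u : ℕ) : ℤ :=
  if u + 3 ≤ n then (if 2 ≤ u then c (u-1) else 0) + c (u+1)
  else if u = n - 2 then (if 4 ≤ n then c (n-3) else 0) + c (n-1) + c n
  else if u = n - 1 then c (n-2)
  else if u = n then c (n-2)
  else 0

def eD (n : ℕ) (lam c : ℕ → ℤ) (u : ℕ) : ℤ := lam u - 2 * c u + nbs n c u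

def pairD (n : ℕ) (lam c γ : ℕ → ℤ) : ℤ := ∑ u ∈ Icc 1 n, γ u * eD n lam c u

def SD (n : ℕ) (lam : ℕ → ℤ) : ℤ := (∑ j ∈ Icc 1 (n-2), 2 * lam j) + lam (n-1) + lam n

def Inv (n : ℕ) (lam c : ℕ → ℤ) : Prop := ∀ γ, Ga n γ → pairD n lam c γ ≤ SD n lam

lemma ga_bounds {n : ℕ} (hn : 3 ≤ n) {γ : ℕ → ℤ} (hγ : Ga n γ) (u : ℕ) :
    0 ≤ γ u ∧ (u ≤ n-2 → γ u ≤ 2) ∧ (u = n-1 ∨ u = n → γ u ≤ 1) := by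
  rcases hγ with ⟨a,b,h1,h2,h3,rfl⟩ | ⟨a,h1,h2,rfl⟩ | ⟨a,b,h1,h2,h3,rfl⟩ <;>
    simp only [ind] <;> refine ⟨?_, ?_, ?_⟩ <;> split_ifs <;> omega

lemma ga_base {n : ℕ} (hn : 3 ≤ n) {lam : ℕ → ℤ}
    (hlam : ∀ j, 1 ≤ j → j ≤ n → 0 ≤ lam j) {γ : ℕ → ℤ} (hγ : Ga n γ) :
    ∑ u ∈ Icc 1 n, γ u * lam u ≤ SD n lam := by
  have hcap : ∀ u ∈ Icc 1 n, γ u * lam u ≤ (if u ≤ n-2 then 2 else 1) * lam u := by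
    intro u hu
    simp only [mem_Icc] at hu
    have h0 : 0 ≤ lam u := hlam u hu.1 hu.2
    obtain ⟨hb0, hb2, hb1⟩ := ga_bounds hn hγ u
    split_ifs with h
    · nlinarith [hb2 h]
    · nlinarith [hb1 (by omega)]
  refine le_trans (Finset.sum_le_sum hcap) ?_
  have hsplit : Icc 1 n = Icc 1 (n-2) ∪ {n-1, n} := by
    ext x; simp [mem_Icc]; omega
  have hdisj : Disjoint (Icc 1 (n-2)) ({n-1, n} : Finset ℕ) := by
    simp [disjoint_left, mem_Icc]; omega
  rw [hsplit, Finset.sum_union hdisj]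
  have h1 : ∑ u ∈ Icc 1 (n-2), (if u ≤ n-2 then (2:ℤ) else 1) * lam u
      = ∑ j ∈ Icc 1 (n-2), 2 * lam j := by
    refine Finset.sum_congr rfl ?_
    intro u hu; simp only [mem_Icc] at hu; rw [if_pos hu.2]
  have h2 : ∑ u ∈ ({n-1, n} : Finset ℕ), (if u ≤ n-2 then (2:ℤ) else 1) * lam u
      = lam (n-1) + lam n := by
    rw [Finset.sum_pair (by omega : n-1 ≠ n)]
    rw [if_neg (by omega), if_neg (by omega)]; ring
  rw [h1, h2]; exact le_of_eq (by rw [SD]; ring)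

lemma nbs_A {n : ℕ} {c : ℕ → ℤ} {u : ℕ} (h : u + 3 ≤ n) :
    nbs n c u = (if 2 ≤ u then c (u-1) else 0) + c (u+1) := by rw [nbs, if_pos h]

lemma nbs_B {n : ℕ} {c : ℕ → ℤ} {u : ℕ} (hn : 3 ≤ n) (h : u = n-2) :
    nbs n c u = (if 4 ≤ n then c (n-3) else 0) + c (n-1) + c n := by
  rw [nbs, if_neg (by omega), if_pos h]

lemma nbs_C {n : ℕ} {c : ℕ → ℤ} {u : ℕ} (hn : 3 ≤ n) (h : u = n-1) :
    nbs n c u = c (n-2) := by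
  rw [nbs, if_neg (by omega), if_neg (by omega), if_pos h]

lemma nbs_D {n : ℕ} {c : ℕ → ℤ} {u : ℕ} (hn : 3 ≤ n) (h : u = n) :
    nbs n c u = c (n-2) := by
  rw [nbs, if_neg (by omega), if_neg (by omega), if_neg (by omega), if_pos h]

lemma ind_cases (a b r : ℕ) :
    ((a ≤ r ∧ r ≤ b) ∧ ind a b r = 1) ∨ (¬(a ≤ r ∧ r ≤ b) ∧ ind a b r = 0) := by
  unfold ind; split_ifs with h
  exacts [Or.inl ⟨h, rfl⟩, Or.inr ⟨h, rfl⟩]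

lemma keyT1 {n a b s : ℕ} (hn : 3 ≤ n) (h1 : 1 ≤ a) (h2 : a ≤ b) (h3 : b ≤ n-1)
    (hs1 : 1 ≤ s) (hsn : s ≤ n) :
    0 ≤ 2 * ind a b s - nbs n (fun r => ind a b r) s ∨
    (2 * ind a b s - nbs n (fun r => ind a b r) s = -1 ∧
      Ga n (fun r => ind a b r + if r = s then 1 else 0)) := by
  have W : ∀ P : Prop, (P) → (2 * ind a b s - nbs n (fun r => ind a b r) s = -1) →
      0 ≤ 2 * ind a b s - nbs n (fun r => ind a b r) s ∨
      (2 * ind a b s - nbs n (fun r => ind a b r) s = -1 ∧ P) :=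
    fun P hP hcp => Or.inr ⟨hcp, hP⟩
  by_cases hc1 : a = s + 1
  · refine W _ (Or.inl ⟨s, b, hs1, by omega, h3, funext fun r => ?_⟩) ?_
    · have e1 := ind_cases a b r; have e2 := ind_cases s b r
      split_ifs <;> omega
    · rcases (show (s+3 ≤ n) ∨ (3 ≤ n ∧ s = n-2) ∨ (3 ≤ n ∧ s = n-1) ∨ (3 ≤ n ∧ s = n) by omega) with h | h | h | h
      · rw [nbs_A h]
        have e1 := ind_cases a b (s-1); have e2 := ind_cases a b s
        have e3 := ind_cases a b (s+1)
        split_ifs <;> omega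
      · rw [nbs_B h.1 h.2]
        have e1 := ind_cases a b (n-3); have e2 := ind_cases a b s
        have e3 := ind_cases a b (n-1); have e4 := ind_cases a b n
        split_ifs <;> omega
      · rw [nbs_C h.1 h.2]
        have e1 := ind_cases a b (n-2); have e2 := ind_cases a b s
        omega
      · rw [nbs_D h.1 h.2]
        have e1 := ind_cases a b (n-2); have e2 := ind_cases a b s
        omega
  · by_cases hc2 : s = b + 1 ∧ s ≤ n - 1
    · refine W _ (Or.inl ⟨a, s, h1, by omega, hc2.2, funext fun r => ?_⟩) ?_
      · have e1 := ind_cases a b r; have e2 := ind_cases a s r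
        split_ifs <;> omega
      · rcases (show (s+3 ≤ n) ∨ (3 ≤ n ∧ s = n-2) ∨ (3 ≤ n ∧ s = n-1) ∨ (3 ≤ n ∧ s = n) by omega) with h | h | h | h
        · rw [nbs_A h]
          have e1 := ind_cases a b (s-1); have e2 := ind_cases a b s
          have e3 := ind_cases a b (s+1)
          split_ifs <;> omega
        · rw [nbs_B h.1 h.2]
          have e1 := ind_cases a b (n-3); have e2 := ind_cases a b s
          have e3 := ind_cases a b (n-1); have e4 := ind_cases a b n
          split_ifs <;> omega
        · rw [nbs_C h.1 h.2]
          have e1 := ind_cases a b (n-2); have e2 := ind_cases a b s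
          omega
        · rw [nbs_D h.1 h.2]
          have e1 := ind_cases a b (n-2); have e2 := ind_cases a b s
          omega
    · by_cases hc3 : s = n ∧ a ≤ n-2 ∧ n-2 ≤ b
      · by_cases hb : b = n - 2
        · refine W _ (Or.inr (Or.inl ⟨a, h1, by omega, funext fun r => ?_⟩)) ?_
          · have e1 := ind_cases a b r; have e2 := ind_cases a (n-2) r
            have e3 := ind_cases n n r
            split_ifs <;> omega
          · rw [nbs_D hn hc3.1]
            have e1 := ind_cases a b (n-2); have e2 := ind_cases a b s
            omega
        · refine W _ (Or.inr (Or.inr ⟨a, n-1, h1, by omega, by omega, funext fun r => ?_⟩)) ?_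
          · have e1 := ind_cases a b r; have e2 := ind_cases a (n-1) r
            have e3 := ind_cases (n-1) (n-2) r; have e4 := ind_cases n n r
            split_ifs <;> omega
          · rw [nbs_D hn hc3.1]
            have e1 := ind_cases a b (n-2); have e2 := ind_cases a b s
            omega
      · left
        rcases (show (s+3 ≤ n) ∨ (3 ≤ n ∧ s = n-2) ∨ (3 ≤ n ∧ s = n-1) ∨ (3 ≤ n ∧ s = n) by omega) with h | h | h | h
        · rw [nbs_A h]
          have e1 := ind_cases a b (s-1); have e2 := ind_cases a b s
          have e3 := ind_cases a b (s+1)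
          split_ifs <;> omega
        · rw [nbs_B h.1 h.2]
          have e1 := ind_cases a b (n-3); have e2 := ind_cases a b s
          have e3 := ind_cases a b (n-1); have e4 := ind_cases a b n
          split_ifs <;> omega
        · rw [nbs_C h.1 h.2]
          have e1 := ind_cases a b (n-2); have e2 := ind_cases a b s
          omega
        · rw [nbs_D h.1 h.2]
          have e1 := ind_cases a b (n-2); have e2 := ind_cases a b s
          omega

lemma keyT3 {n a s : ℕ} (hn : 3 ≤ n) (h1 : 1 ≤ a) (h2 : a ≤ n-1)
    (hs1 : 1 ≤ s) (hsn : s ≤ n) :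
    0 ≤ 2 * (ind a (n-2) s + ind n n s) - nbs n (fun r => ind a (n-2) r + ind n n r) s ∨
    (2 * (ind a (n-2) s + ind n n s) - nbs n (fun r => ind a (n-2) r + ind n n r) s = -1 ∧
      Ga n (fun r => (ind a (n-2) r + ind n n r) + if r = s then 1 else 0)) := by
  have W : ∀ P : Prop, (P) →
      (2 * (ind a (n-2) s + ind n n s) - nbs n (fun r => ind a (n-2) r + ind n n r) s = -1) →
      0 ≤ 2 * (ind a (n-2) s + ind n n s) - nbs n (fun r => ind a (n-2) r + ind n n r) s ∨
      (2 * (ind a (n-2) s + ind n n s) - nbs n (fun r => ind a (n-2) r + ind n n r) s = -1 ∧ P) :=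
    fun P hP hcp => Or.inr ⟨hcp, hP⟩
  by_cases hc1 : a = s + 1
  · refine W _ (Or.inr (Or.inl ⟨s, hs1, by omega, funext fun r => ?_⟩)) ?_
    · have e1 := ind_cases a (n-2) r; have e2 := ind_cases n n r
      have e3 := ind_cases s (n-2) r
      split_ifs <;> omega
    · rcases (show (s+3 ≤ n) ∨ (3 ≤ n ∧ s = n-2) ∨ (3 ≤ n ∧ s = n-1) ∨ (3 ≤ n ∧ s = n) by omega) with h | h | h | h
      · rw [nbs_A h]
        have e1 := ind_cases a (n-2) (s-1); have e2 := ind_cases n n (s-1)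
        have e3 := ind_cases a (n-2) s; have e4 := ind_cases n n s
        have e5 := ind_cases a (n-2) (s+1); have e6 := ind_cases n n (s+1)
        split_ifs <;> omega
      · rw [nbs_B h.1 h.2]
        have e1 := ind_cases a (n-2) (n-3); have e2 := ind_cases n n (n-3)
        have e3 := ind_cases a (n-2) s; have e4 := ind_cases n n s
        have e5 := ind_cases a (n-2) (n-1); have e6 := ind_cases n n (n-1)
        have e7 := ind_cases a (n-2) n; have e8 := ind_cases n n n
        split_ifs <;> omega
      · rw [nbs_C h.1 h.2]
        have e1 := ind_cases a (n-2) (n-2); have e2 := ind_cases n n (n-2)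
        have e3 := ind_cases a (n-2) s; have e4 := ind_cases n n s
        omega
      · rw [nbs_D h.1 h.2]
        have e1 := ind_cases a (n-2) (n-2); have e2 := ind_cases n n (n-2)
        have e3 := ind_cases a (n-2) s; have e4 := ind_cases n n s
        omega
  · by_cases hc2 : s = n - 1 ∧ a ≤ n - 2
    · refine W _ (Or.inr (Or.inr ⟨a, n-1, h1, by omega, by omega, funext fun r => ?_⟩)) ?_
      · have e1 := ind_cases a (n-2) r; have e2 := ind_cases n n r
        have e3 := ind_cases a (n-1) r; have e4 := ind_cases (n-1) (n-2) r
        split_ifs <;> omega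
      · rw [nbs_C hn hc2.1]
        have e1 := ind_cases a (n-2) (n-2); have e2 := ind_cases n n (n-2)
        have e3 := ind_cases a (n-2) s; have e4 := ind_cases n n s
        omega
    · left
      rcases (show (s+3 ≤ n) ∨ (3 ≤ n ∧ s = n-2) ∨ (3 ≤ n ∧ s = n-1) ∨ (3 ≤ n ∧ s = n) by omega) with h | h | h | h
      · rw [nbs_A h]
        have e1 := ind_cases a (n-2) (s-1); have e2 := ind_cases n n (s-1)
        have e3 := ind_cases a (n-2) s; have e4 := ind_cases n n s
        have e5 := ind_cases a (n-2) (s+1); have e6 := ind_cases n n (s+1)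
        split_ifs <;> omega
      · rw [nbs_B h.1 h.2]
        have e1 := ind_cases a (n-2) (n-3); have e2 := ind_cases n n (n-3)
        have e3 := ind_cases a (n-2) s; have e4 := ind_cases n n s
        have e5 := ind_cases a (n-2) (n-1); have e6 := ind_cases n n (n-1)
        have e7 := ind_cases a (n-2) n; have e8 := ind_cases n n n
        split_ifs <;> omega
      · rw [nbs_C h.1 h.2]
        have e1 := ind_cases a (n-2) (n-2); have e2 := ind_cases n n (n-2)
        have e3 := ind_cases a (n-2) s; have e4 := ind_cases n n s
        omega
      · rw [nbs_D h.1 h.2]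
        have e1 := ind_cases a (n-2) (n-2); have e2 := ind_cases n n (n-2)
        have e3 := ind_cases a (n-2) s; have e4 := ind_cases n n s
        omega

lemma keyT5 {n a b s : ℕ} (hn : 3 ≤ n) (h1 : 1 ≤ a) (h2 : a < b) (h3 : b ≤ n-1)
    (hs1 : 1 ≤ s) (hsn : s ≤ n) :
    0 ≤ 2 * (ind a (n-1) s + ind b (n-2) s + ind n n s)
        - nbs n (fun r => ind a (n-1) r + ind b (n-2) r + ind n n r) s ∨
    (2 * (ind a (n-1) s + ind b (n-2) s + ind n n s)
        - nbs n (fun r => ind a (n-1) r + ind b (n-2) r + ind n n r) s = -1 ∧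
      Ga n (fun r => (ind a (n-1) r + ind b (n-2) r + ind n n r) + if r = s then 1 else 0)) := by
  have W : ∀ P : Prop, (P) →
      (2 * (ind a (n-1) s + ind b (n-2) s + ind n n s)
        - nbs n (fun r => ind a (n-1) r + ind b (n-2) r + ind n n r) s = -1) →
      0 ≤ 2 * (ind a (n-1) s + ind b (n-2) s + ind n n s)
        - nbs n (fun r => ind a (n-1) r + ind b (n-2) r + ind n n r) s ∨
      (2 * (ind a (n-1) s + ind b (n-2) s + ind n n s)
        - nbs n (fun r => ind a (n-1) r + ind b (n-2) r + ind n n r) s = -1 ∧ P) :=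
    fun P hP hcp => Or.inr ⟨hcp, hP⟩
  by_cases hc1 : a = s + 1
  · refine W _ (Or.inr (Or.inr ⟨s, b, hs1, by omega, h3, funext fun r => ?_⟩)) ?_
    · have e1 := ind_cases a (n-1) r; have e2 := ind_cases b (n-2) r
      have e3 := ind_cases n n r; have e4 := ind_cases s (n-1) r
      split_ifs <;> omega
    · rcases (show (s+3 ≤ n) ∨ (3 ≤ n ∧ s = n-2) ∨ (3 ≤ n ∧ s = n-1) ∨ (3 ≤ n ∧ s = n) by omega) with h | h | h | h
      · rw [nbs_A h]
        have e1 := ind_cases a (n-1) (s-1); have e2 := ind_cases b (n-2) (s-1)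
        have e3 := ind_cases n n (s-1); have e4 := ind_cases a (n-1) s
        have e5 := ind_cases b (n-2) s; have e6 := ind_cases n n s
        have e7 := ind_cases a (n-1) (s+1); have e8 := ind_cases b (n-2) (s+1)
        have e9 := ind_cases n n (s+1)
        split_ifs <;> omega
      · rw [nbs_B h.1 h.2]
        have e1 := ind_cases a (n-1) (n-3); have e2 := ind_cases b (n-2) (n-3)
        have e3 := ind_cases n n (n-3); have e4 := ind_cases a (n-1) s
        have e5 := ind_cases b (n-2) s; have e6 := ind_cases n n s
        have e7 := ind_cases a (n-1) (n-1); have e8 := ind_cases b (n-2) (n-1)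
        have e9 := ind_cases n n (n-1); have e10 := ind_cases a (n-1) n
        have e11 := ind_cases b (n-2) n; have e12 := ind_cases n n n
        split_ifs <;> omega
      · rw [nbs_C h.1 h.2]
        have e1 := ind_cases a (n-1) (n-2); have e2 := ind_cases b (n-2) (n-2)
        have e3 := ind_cases n n (n-2); have e4 := ind_cases a (n-1) s
        have e5 := ind_cases b (n-2) s; have e6 := ind_cases n n s
        omega
      · rw [nbs_D h.1 h.2]
        have e1 := ind_cases a (n-1) (n-2); have e2 := ind_cases b (n-2) (n-2)
        have e3 := ind_cases n n (n-2); have e4 := ind_cases a (n-1) s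
        have e5 := ind_cases b (n-2) s; have e6 := ind_cases n n s
        omega
  · by_cases hc2 : b = s + 1 ∧ a < s
    · refine W _ (Or.inr (Or.inr ⟨a, s, h1, hc2.2, by omega, funext fun r => ?_⟩)) ?_
      · have e1 := ind_cases a (n-1) r; have e2 := ind_cases b (n-2) r
        have e3 := ind_cases n n r; have e4 := ind_cases s (n-2) r
        split_ifs <;> omega
      · rcases (show (s+3 ≤ n) ∨ (3 ≤ n ∧ s = n-2) ∨ (3 ≤ n ∧ s = n-1) ∨ (3 ≤ n ∧ s = n) by omega) with h | h | h | h
        · rw [nbs_A h]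
          have e1 := ind_cases a (n-1) (s-1); have e2 := ind_cases b (n-2) (s-1)
          have e3 := ind_cases n n (s-1); have e4 := ind_cases a (n-1) s
          have e5 := ind_cases b (n-2) s; have e6 := ind_cases n n s
          have e7 := ind_cases a (n-1) (s+1); have e8 := ind_cases b (n-2) (s+1)
          have e9 := ind_cases n n (s+1)
          split_ifs <;> omega
        · rw [nbs_B h.1 h.2]
          have e1 := ind_cases a (n-1) (n-3); have e2 := ind_cases b (n-2) (n-3)
          have e3 := ind_cases n n (n-3); have e4 := ind_cases a (n-1) s
          have e5 := ind_cases b (n-2) s; have e6 := ind_cases n n s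
          have e7 := ind_cases a (n-1) (n-1); have e8 := ind_cases b (n-2) (n-1)
          have e9 := ind_cases n n (n-1); have e10 := ind_cases a (n-1) n
          have e11 := ind_cases b (n-2) n; have e12 := ind_cases n n n
          split_ifs <;> omega
        · rw [nbs_C h.1 h.2]
          have e1 := ind_cases a (n-1) (n-2); have e2 := ind_cases b (n-2) (n-2)
          have e3 := ind_cases n n (n-2); have e4 := ind_cases a (n-1) s
          have e5 := ind_cases b (n-2) s; have e6 := ind_cases n n s
          omega
        · rw [nbs_D h.1 h.2]
          have e1 := ind_cases a (n-1) (n-2); have e2 := ind_cases b (n-2) (n-2)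
          have e3 := ind_cases n n (n-2); have e4 := ind_cases a (n-1) s
          have e5 := ind_cases b (n-2) s; have e6 := ind_cases n n s
          omega
    · left
      rcases (show (s+3 ≤ n) ∨ (3 ≤ n ∧ s = n-2) ∨ (3 ≤ n ∧ s = n-1) ∨ (3 ≤ n ∧ s = n) by omega) with h | h | h | h
      · rw [nbs_A h]
        have e1 := ind_cases a (n-1) (s-1); have e2 := ind_cases b (n-2) (s-1)
        have e3 := ind_cases n n (s-1); have e4 := ind_cases a (n-1) s
        have e5 := ind_cases b (n-2) s; have e6 := ind_cases n n s
        have e7 := ind_cases a (n-1) (s+1); have e8 := ind_cases b (n-2) (s+1)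
        have e9 := ind_cases n n (s+1)
        split_ifs <;> omega
      · rw [nbs_B h.1 h.2]
        have e1 := ind_cases a (n-1) (n-3); have e2 := ind_cases b (n-2) (n-3)
        have e3 := ind_cases n n (n-3); have e4 := ind_cases a (n-1) s
        have e5 := ind_cases b (n-2) s; have e6 := ind_cases n n s
        have e7 := ind_cases a (n-1) (n-1); have e8 := ind_cases b (n-2) (n-1)
        have e9 := ind_cases n n (n-1); have e10 := ind_cases a (n-1) n
        have e11 := ind_cases b (n-2) n; have e12 := ind_cases n n n
        split_ifs <;> omega
      · rw [nbs_C h.1 h.2]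
        have e1 := ind_cases a (n-1) (n-2); have e2 := ind_cases b (n-2) (n-2)
        have e3 := ind_cases n n (n-2); have e4 := ind_cases a (n-1) s
        have e5 := ind_cases b (n-2) s; have e6 := ind_cases n n s
        omega
      · rw [nbs_D h.1 h.2]
        have e1 := ind_cases a (n-1) (n-2); have e2 := ind_cases b (n-2) (n-2)
        have e3 := ind_cases n n (n-2); have e4 := ind_cases a (n-1) s
        have e5 := ind_cases b (n-2) s; have e6 := ind_cases n n s
        omega

lemma key {n : ℕ} (hn : 3 ≤ n) {γ : ℕ → ℤ} (hγ : Ga n γ) {s : ℕ}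
    (hs1 : 1 ≤ s) (hsn : s ≤ n) :
    0 ≤ 2 * γ s - nbs n γ s ∨
    (2 * γ s - nbs n γ s = -1 ∧ Ga n (fun r => γ r + if r = s then 1 else 0)) := by
  rcases hγ with ⟨a,b,h1,h2,h3,rfl⟩ | ⟨a,h1,h2,rfl⟩ | ⟨a,b,h1,h2,h3,rfl⟩
  · exact keyT1 hn h1 h2 h3 hs1 hsn
  · exact keyT3 hn h1 h2 hs1 hsn
  · exact keyT5 hn h1 h2 h3 hs1 hsn

lemma nbs_add (n : ℕ) (c1 c2 : ℕ → ℤ) (u : ℕ) :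
    nbs n (fun r => c1 r + c2 r) u = nbs n c1 u + nbs n c2 u := by
  unfold nbs; split_ifs <;> ring

lemma nbs_zero (n u : ℕ) : nbs n (fun _ => 0) u = 0 := by
  unfold nbs; split_ifs <;> ring

lemma nbs_congr {n u : ℕ} {c1 c2 : ℕ → ℤ} (hn : 3 ≤ n) (hu1 : 1 ≤ u) (hun : u ≤ n)
    (h : ∀ r, 1 ≤ r → r ≤ n → c1 r = c2 r) : nbs n c1 u = nbs n c2 u := by
  rcases (show (u+3 ≤ n) ∨ (3 ≤ n ∧ u = n-2) ∨ (3 ≤ n ∧ u = n-1) ∨ (3 ≤ n ∧ u = n) by omega)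
    with hr | hr | hr | hr
  · rw [nbs_A hr, nbs_A hr, h (u+1) (by omega) (by omega)]
    by_cases h2 : 2 ≤ u
    · rw [if_pos h2, if_pos h2, h (u-1) (by omega) (by omega)]
    · rw [if_neg h2, if_neg h2]
  · rw [nbs_B hr.1 hr.2, nbs_B hr.1 hr.2, h (n-1) (by omega) (by omega),
      h n (by omega) (by omega)]
    by_cases h4 : 4 ≤ n
    · rw [if_pos h4, if_pos h4, h (n-3) (by omega) (by omega)]
    · rw [if_neg h4, if_neg h4]
  · rw [nbs_C hr.1 hr.2, nbs_C hr.1 hr.2, h (n-2) (by omega) (by omega)]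
  · rw [nbs_D hr.1 hr.2, nbs_D hr.1 hr.2, h (n-2) (by omega) (by omega)]

lemma eD_congr {n u : ℕ} {lam c1 c2 : ℕ → ℤ} (hn : 3 ≤ n) (hu1 : 1 ≤ u) (hun : u ≤ n)
    (h : ∀ r, 1 ≤ r → r ≤ n → c1 r = c2 r) : eD n lam c1 u = eD n lam c2 u := by
  unfold eD; rw [h u hu1 hun, nbs_congr hn hu1 hun h]

lemma inv_congr {n : ℕ} {lam c1 c2 : ℕ → ℤ} (hn : 3 ≤ n)
    (h : ∀ r, 1 ≤ r → r ≤ n → c1 r = c2 r) (hI : Inv n lam c1) : Inv n lam c2 := by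
  intro γ hγ
  have : pairD n lam c2 γ = pairD n lam c1 γ := by
    unfold pairD
    refine Finset.sum_congr rfl fun u hu => ?_
    simp only [mem_Icc] at hu
    rw [eD_congr hn hu.1 hu.2 h]
  rw [this]; exact hI γ hγ

lemma sum_single_point {n s : ℕ} (hs1 : 1 ≤ s) (hsn : s ≤ n) (f : ℕ → ℤ) :
    ∑ u ∈ Icc 1 n, (if u = s then f u else 0) = f s := by
  rw [Finset.sum_ite_eq' (Icc 1 n) s f, if_pos (by simp [mem_Icc]; omega)]

set_option maxHeartbeats 3200000 in
lemma nbs_delta_sum {n s : ℕ} (hn : 3 ≤ n) (hs1 : 1 ≤ s) (hsn : s ≤ n)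
    (γ : ℕ → ℤ) (tv : ℤ) :
    ∑ u ∈ Icc 1 n, γ u * nbs n (fun r => if r = s then tv else 0) u
      = tv * nbs n γ s := by
  rcases (show (s+3 ≤ n) ∨ (3 ≤ n ∧ s = n-2) ∨ (3 ≤ n ∧ s = n-1) ∨ (3 ≤ n ∧ s = n) by omega)
    with hr | hr | hr | hr
  · by_cases h2 : 2 ≤ s
    · have hpt : ∀ u ∈ Icc 1 n, γ u * nbs n (fun r => if r = s then tv else 0) u
          = (if u = s-1 then γ u * tv else 0) + (if u = s+1 then γ u * tv else 0) := by
        intro u hu; simp only [mem_Icc] at hu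
        simp only [nbs]; split_ifs <;> first | (exfalso; omega) | ring1
      rw [Finset.sum_congr rfl hpt, Finset.sum_add_distrib,
        sum_single_point (by omega) (by omega), sum_single_point (by omega) (by omega),
        nbs_A hr, if_pos h2]
      ring
    · have hpt : ∀ u ∈ Icc 1 n, γ u * nbs n (fun r => if r = s then tv else 0) u
          = (if u = s+1 then γ u * tv else 0) := by
        intro u hu; simp only [mem_Icc] at hu
        simp only [nbs]; split_ifs <;> first | (exfalso; omega) | ring1
      rw [Finset.sum_congr rfl hpt, sum_single_point (by omega) (by omega),
        nbs_A hr, if_neg h2]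
      ring
  · by_cases h4 : 4 ≤ n
    · have hpt : ∀ u ∈ Icc 1 n, γ u * nbs n (fun r => if r = s then tv else 0) u
          = (if u = n-3 then γ u * tv else 0) + ((if u = n-1 then γ u * tv else 0)
            + (if u = n then γ u * tv else 0)) := by
        intro u hu; simp only [mem_Icc] at hu
        simp only [nbs]; split_ifs <;> first | (exfalso; omega) | ring1
      rw [Finset.sum_congr rfl hpt, Finset.sum_add_distrib, Finset.sum_add_distrib,
        sum_single_point (by omega) (by omega), sum_single_point (by omega) (by omega),
        sum_single_point (by omega) (by omega), nbs_B hr.1 hr.2, if_pos h4]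
      ring
    · have hpt : ∀ u ∈ Icc 1 n, γ u * nbs n (fun r => if r = s then tv else 0) u
          = (if u = n-1 then γ u * tv else 0) + (if u = n then γ u * tv else 0) := by
        intro u hu; simp only [mem_Icc] at hu
        simp only [nbs]; split_ifs <;> first | (exfalso; omega) | ring1
      rw [Finset.sum_congr rfl hpt, Finset.sum_add_distrib,
        sum_single_point (by omega) (by omega), sum_single_point (by omega) (by omega),
        nbs_B hr.1 hr.2, if_neg h4]
      ring
  · have hpt : ∀ u ∈ Icc 1 n, γ u * nbs n (fun r => if r = s then tv else 0) u
        = (if u = n-2 then γ u * tv else 0) := by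
      intro u hu; simp only [mem_Icc] at hu
      simp only [nbs]; split_ifs <;> first | (exfalso; omega) | ring1
    rw [Finset.sum_congr rfl hpt, sum_single_point (by omega) (by omega),
      nbs_C hr.1 hr.2]
    ring
  · have hpt : ∀ u ∈ Icc 1 n, γ u * nbs n (fun r => if r = s then tv else 0) u
        = (if u = n-2 then γ u * tv else 0) := by
      intro u hu; simp only [mem_Icc] at hu
      simp only [nbs]; split_ifs <;> first | (exfalso; omega) | ring1
    rw [Finset.sum_congr rfl hpt, sum_single_point (by omega) (by omega),
      nbs_D hr.1 hr.2]
    ring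

lemma pairD_delta {n s : ℕ} (hn : 3 ≤ n) (hs1 : 1 ≤ s) (hsn : s ≤ n)
    (lam c γ : ℕ → ℤ) (tv : ℤ) :
    pairD n lam (fun r => c r + if r = s then tv else 0) γ
      = pairD n lam c γ - tv * (2 * γ s - nbs n γ s) := by
  unfold pairD
  have hpt : ∀ u ∈ Icc 1 n,
      γ u * eD n lam (fun r => c r + if r = s then tv else 0) u
        = γ u * eD n lam c u + ((-2) * (if u = s then γ u * tv else 0)
          + γ u * nbs n (fun r => if r = s then tv else 0) u) := by
    intro u hu
    have hb : eD n lam (fun r => c r + if r = s then tv else 0) u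
        = lam u - 2 * (c u + if u = s then tv else 0)
          + (nbs n c u + nbs n (fun r => if r = s then tv else 0) u) := by
      simp only [eD, nbs_add]
    rw [hb]
    by_cases h : u = s
    · rw [if_pos h, if_pos h]; unfold eD; ring
    · rw [if_neg h, if_neg h]; unfold eD; ring
  rw [Finset.sum_congr rfl hpt, Finset.sum_add_distrib, Finset.sum_add_distrib,
    ← Finset.mul_sum, sum_single_point hs1 hsn (fun u => γ u * tv),
    nbs_delta_sum hn hs1 hsn γ tv]
  ring

lemma pairD_add_single {n s : ℕ} (hs1 : 1 ≤ s) (hsn : s ≤ n) (lam c γ : ℕ → ℤ) :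
    pairD n lam c (fun r => γ r + if r = s then 1 else 0)
      = pairD n lam c γ + eD n lam c s := by
  unfold pairD
  have hpt : ∀ u ∈ Icc 1 n,
      (γ u + if u = s then 1 else 0) * eD n lam c u
        = γ u * eD n lam c u + (if u = s then eD n lam c u else 0) := by
    intro u hu
    by_cases h : u = s
    · rw [if_pos h, if_pos h]; ring
    · rw [if_neg h, if_neg h]; ring
  rw [Finset.sum_congr rfl hpt, Finset.sum_add_distrib,
    sum_single_point hs1 hsn]

lemma inv_step {n : ℕ} {lam c : ℕ → ℤ} (hn : 3 ≤ n) (hI : Inv n lam c)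
    {s : ℕ} {tv : ℤ} (hs1 : 1 ≤ s) (hsn : s ≤ n) (htv : 0 ≤ tv)
    (hb : tv ≤ eD n lam c s) :
    Inv n lam (fun r => c r + if r = s then tv else 0) := by
  intro γ hγ
  rw [pairD_delta hn hs1 hsn]
  rcases key hn hγ hs1 hsn with h | ⟨h, hGa⟩
  · have h0 := mul_nonneg htv h
    have h1 := hI γ hγ
    linarith
  · rw [h]
    have h2 := pairD_add_single hs1 hsn lam c γ
    have h3 := hI _ hGa
    linarith

lemma inv_zero {n : ℕ} (hn : 3 ≤ n) {lam : ℕ → ℤ}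
    (hlam : ∀ j, 1 ≤ j → j ≤ n → 0 ≤ lam j) : Inv n lam (fun _ => 0) := by
  intro γ hγ
  have : pairD n lam (fun _ => 0) γ = ∑ u ∈ Icc 1 n, γ u * lam u := by
    unfold pairD
    refine Finset.sum_congr rfl fun u hu => ?_
    unfold eD; rw [nbs_zero]; ring
  rw [this]; exact ga_base hn hlam hγ

/-- `cD` from the theorem statement, restated locally. -/
def cDl (n : ℕ) (t : ℕ → ℕ → ℤ) (i j : ℕ) : ℤ :=
  if j < n - 1 then ∑ k ∈ Finset.Icc i (n - 1), (t k j + t k (2 * n - 1 - j))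
  else if j = n - 1 ∨ j = n then ∑ k ∈ Finset.Icc i (n - 1), (t k (n - 1) + t k n)
  else t i j + ∑ k ∈ Finset.Icc (i + 1) (n - 1), (t k (2 * n - 1 - j) + t k j)

lemma cD_lt {n : ℕ} {t : ℕ → ℕ → ℤ} {i c : ℕ} (h : c < n-1) :
    cDl n t i c = ∑ k ∈ Icc i (n-1), (t k c + t k (2*n-1-c)) := by
  rw [cDl, if_pos h]

lemma cD_mid {n : ℕ} {t : ℕ → ℕ → ℤ} {i c : ℕ} (h : c = n-1 ∨ c = n) :
    cDl n t i c = ∑ k ∈ Icc i (n-1), (t k (n-1) + t k n) := by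
  rw [cDl, if_neg (by omega), if_pos h]

lemma cD_gt {n : ℕ} {t : ℕ → ℕ → ℤ} {i c : ℕ} (h : n < c) :
    cDl n t i c = t i c + ∑ k ∈ Icc (i+1) (n-1), (t k (2*n-1-c) + t k c) := by
  rw [cDl, if_neg (by omega), if_neg (by omega)]

lemma Icc_split {i m : ℕ} (h : i ≤ m) (f : ℕ → ℤ) :
    ∑ k ∈ Icc i m, f k = f i + ∑ k ∈ Icc (i+1) m, f k := by
  rw [show Icc i m = insert i (Icc (i+1) m) by ext x; simp [mem_Icc]; omega,
    Finset.sum_insert (by simp [mem_Icc])]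

/-- column counts for the tail consisting of rows `i, i+1, …, n-1`. -/
def cntR (n : ℕ) (t : ℕ → ℕ → ℤ) (i r : ℕ) : ℤ :=
  if 1 ≤ r ∧ r ≤ n-2 then ∑ k ∈ Icc i (n-1), (t k r + t k (2*n-1-r))
  else if r = n-1 then ∑ k ∈ Icc i (n-1), t k (n-1)
  else if r = n then ∑ k ∈ Icc i (n-1), t k n
  else 0

/-- counts after also adding the second-pass entries of row `i` for roots `n-i ≤ r ≤ j`. -/
def cntS (n : ℕ) (t : ℕ → ℕ → ℤ) (i j r : ℕ) : ℤ :=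
  cntR n t (i+1) r + (if n-i ≤ r ∧ r ≤ j ∧ r ≤ n-2 then t i (2*n-1-r) else 0)

/-- counts after also adding `t i n`. -/
def cntQ (n : ℕ) (t : ℕ → ℕ → ℤ) (i r : ℕ) : ℤ :=
  cntS n t i (n-2) r + (if r = n then t i n else 0)

/-- counts after also adding `t i (n-1)`. -/
def cntM (n : ℕ) (t : ℕ → ℕ → ℤ) (i r : ℕ) : ℤ :=
  cntQ n t i r + (if r = n-1 then t i (n-1) else 0)

/-- counts after also adding the first-pass entries of row `i` in columns `j+1 … n-2`. -/
def cntF (n : ℕ) (t : ℕ → ℕ → ℤ) (i j r : ℕ) : ℤ :=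
  cntM n t i r + (if j+1 ≤ r ∧ r ≤ n-2 then t i r else 0)

section Match

variable {n : ℕ} {lam : ℕ → ℤ} {t : ℕ → ℕ → ℤ}

lemma cntS_n2 (hn : 3 ≤ n) {i : ℕ} (hi1 : 1 ≤ i) (hi2 : i ≤ n-1)
    (hsupp : ∀ i j, ¬(1 ≤ i ∧ i ≤ n - 1 ∧ n - i ≤ j ∧ j ≤ n - 1 + i) → t i j = 0) :
    cntS n t i (n-2) (n-2) = cDl n t i (n+1) := by
  rw [cD_gt (by omega)]
  simp only [cntS, cntR]
  rw [if_pos (show 1 ≤ n-2 ∧ n-2 ≤ n-2 by omega)]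
  rw [show 2*n-1-(n-2) = n+1 by omega, show 2*n-1-(n+1) = n-2 by omega]
  by_cases hc : 2 ≤ i
  · rw [if_pos (show n-i ≤ n-2 ∧ n-2 ≤ n-2 ∧ n-2 ≤ n-2 by omega)]; ring
  · rw [if_neg (show ¬(n-i ≤ n-2 ∧ n-2 ≤ n-2 ∧ n-2 ≤ n-2) by omega),
      hsupp i (n+1) (by omega)]
    ring

lemma matchQ (hn : 3 ≤ n) {i : ℕ} (hi1 : 1 ≤ i) (hi2 : i ≤ n-1)
    (hsupp : ∀ i j, ¬(1 ≤ i ∧ i ≤ n - 1 ∧ n - i ≤ j ∧ j ≤ n - 1 + i) → t i j = 0) :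
    eD n lam (cntS n t i (n-2)) n
      = lam n + cDl n t i (n+1) - 2 * (∑ k ∈ Icc (i+1) (n-1), t k n) := by
  have hA : cntS n t i (n-2) n = ∑ k ∈ Icc (i+1) (n-1), t k n := by
    simp only [cntS, cntR]
    split_ifs <;> first | (exfalso; omega) | ring1
  simp only [eD]
  rw [nbs_D hn rfl, hA, cntS_n2 hn hi1 hi2 hsupp]
  ring

lemma matchM (hn : 3 ≤ n) {i : ℕ} (hi1 : 1 ≤ i) (hi2 : i ≤ n-1)
    (hsupp : ∀ i j, ¬(1 ≤ i ∧ i ≤ n - 1 ∧ n - i ≤ j ∧ j ≤ n - 1 + i) → t i j = 0) :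
    eD n lam (cntQ n t i) (n-1)
      = lam (n-1) + cDl n t i (n+1) - 2 * (∑ k ∈ Icc (i+1) (n-1), t k (n-1)) := by
  have hA : cntQ n t i (n-1) = ∑ k ∈ Icc (i+1) (n-1), t k (n-1) := by
    simp only [cntQ, cntS, cntR]
    split_ifs <;> first | (exfalso; omega) | ring1
  have hB : cntQ n t i (n-2) = cDl n t i (n+1) := by
    simp only [cntQ]
    rw [if_neg (show ¬(n-2 = n) by omega), cntS_n2 hn hi1 hi2 hsupp]
    ring
  simp only [eD]
  rw [nbs_C hn rfl, hA, hB]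
  ring

set_option maxHeartbeats 1600000 in
lemma matchS (hn : 3 ≤ n) {i j : ℕ} (hi1 : 1 ≤ i) (hi2 : i ≤ n-1)
    (hj1 : n-i-1 ≤ j) (hj2 : j+1 ≤ n-2)
    (hsupp : ∀ i j, ¬(1 ≤ i ∧ i ≤ n - 1 ∧ n - i ≤ j ∧ j ≤ n - 1 + i) → t i j = 0) :
    eD n lam (cntS n t i j) (j+1)
      = lam (j+1) + cDl n t (i+1) (j+1+1) - 2 * cDl n t (i+1) (j+1)
        + cDl n t i (2*n-(j+1)) := by
  have hA : cntS n t i j (j+1) = cDl n t (i+1) (j+1) := by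
    rw [cD_lt (show j+1 < n-1 by omega)]
    simp only [cntS, cntR]
    split_ifs <;> first | (exfalso; omega) | ring1
  have hdown : (if 2 ≤ j+1 then cntS n t i j j else 0) = cDl n t i (2*n-(j+1)) := by
    rw [cD_gt (show n < 2*n-(j+1) by omega), show 2*n-1-(2*n-(j+1)) = j by omega]
    by_cases h2 : 2 ≤ j+1
    · rw [if_pos h2]
      simp only [cntS, cntR]
      rw [show 2*n-1-j = 2*n-(j+1) by omega]
      by_cases hb : n-i ≤ j
      · split_ifs <;> first | (exfalso; omega) | ring1
      · rw [hsupp i (2*n-(j+1)) (by omega)]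
        split_ifs <;> first | (exfalso; omega) | ring1
    · rw [if_neg h2, hsupp i (2*n-(j+1)) (by omega),
        Finset.sum_eq_zero (fun k hk => ?_)]
      · ring
      · simp only [mem_Icc] at hk
        rw [hsupp k j (by omega), hsupp k (2*n-(j+1)) (by omega)]; ring
  by_cases hreg : j + 1 + 3 ≤ n
  · have hup : cntS n t i j (j+1+1) = cDl n t (i+1) (j+1+1) := by
      rw [cD_lt (show j+1+1 < n-1 by omega)]
      simp only [cntS, cntR]
      split_ifs <;> first | (exfalso; omega) | ring1
    simp only [eD]
    rw [nbs_A hreg, show j+1-1 = j from rfl, hA, hdown, hup]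
    ring
  · have hreg2 : j+1 = n-2 := by omega
    have hmid : cntS n t i j (n-1) + cntS n t i j n = cDl n t (i+1) (j+1+1) := by
      rw [show j+1+1 = n-1 by omega, cD_mid (Or.inl rfl), Finset.sum_add_distrib]
      simp only [cntS, cntR]
      split_ifs <;> first | (exfalso; omega) | ring1
    have hfork : (if 4 ≤ n then cntS n t i j (n-3) else 0) = cDl n t i (2*n-(j+1)) := by
      rw [cD_gt (show n < 2*n-(j+1) by omega), show 2*n-1-(2*n-(j+1)) = j by omega]
      by_cases h4 : 4 ≤ n
      · rw [if_pos h4]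
        simp only [cntS, cntR]
        rw [show (n-3:ℕ) = j by omega, show 2*n-1-j = 2*n-(j+1) by omega]
        by_cases hb : n-i ≤ j
        · split_ifs <;> first | (exfalso; omega) | ring1
        · rw [hsupp i (2*n-(j+1)) (by omega)]
          split_ifs <;> first | (exfalso; omega) | ring1
      · rw [if_neg h4, hsupp i (2*n-(j+1)) (by omega),
          Finset.sum_eq_zero (fun k hk => ?_)]
        · ring
        · simp only [mem_Icc] at hk
          rw [hsupp k j (by omega), hsupp k (2*n-(j+1)) (by omega)]; ring
    simp only [eD]
    rw [nbs_B hn hreg2, hA, hfork]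
    have : cntS n t i j (n-1) + cntS n t i j n = cDl n t (i+1) (j+1+1) := hmid
    linarith [hmid]

set_option maxHeartbeats 1600000 in
lemma matchF (hn : 3 ≤ n) {i j : ℕ} (hi1 : 1 ≤ i) (hi2 : i ≤ n-1)
    (hj1 : n-i ≤ j) (hj2 : j ≤ n-2)
    (hsupp : ∀ i j, ¬(1 ≤ i ∧ i ≤ n - 1 ∧ n - i ≤ j ∧ j ≤ n - 1 + i) → t i j = 0) :
    eD n lam (cntF n t i j) j
      = lam j + cDl n t i (j+1) - 2 * cDl n t i (2*n-1-j) + cDl n t i (2*n-j) := by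
  have hA : cntF n t i j j = cDl n t i (2*n-1-j) := by
    rw [cD_gt (show n < 2*n-1-j by omega), show 2*n-1-(2*n-1-j) = j by omega]
    simp only [cntF, cntM, cntQ, cntS, cntR]
    split_ifs <;> first | (exfalso; omega) | ring1
  have hdown : (if 2 ≤ j then cntF n t i j (j-1) else 0) = cDl n t i (2*n-j) := by
    rw [cD_gt (show n < 2*n-j by omega), show 2*n-1-(2*n-j) = j-1 by omega]
    by_cases h2 : 2 ≤ j
    · rw [if_pos h2]
      simp only [cntF, cntM, cntQ, cntS, cntR]
      rw [show 2*n-1-(j-1) = 2*n-j by omega]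
      by_cases hb : n-i ≤ j-1
      · split_ifs <;> first | (exfalso; omega) | ring1
      · rw [hsupp i (2*n-j) (by omega)]
        split_ifs <;> first | (exfalso; omega) | ring1
    · rw [if_neg h2, hsupp i (2*n-j) (by omega),
        Finset.sum_eq_zero (fun k hk => ?_)]
      · ring
      · simp only [mem_Icc] at hk
        rw [hsupp k (j-1) (by omega), hsupp k (2*n-j) (by omega)]; ring
  by_cases hreg : j + 3 ≤ n
  · have hup : cntF n t i j (j+1) = cDl n t i (j+1) := by
      rw [cD_lt (show j+1 < n-1 by omega), Icc_split (show i ≤ n-1 from hi2)]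
      simp only [cntF, cntM, cntQ, cntS, cntR]
      split_ifs <;> first | (exfalso; omega) | ring1
    simp only [eD]
    rw [nbs_A hreg, hA, hdown, hup]
    ring
  · have hreg2 : j = n-2 := by omega
    have hmid : cntF n t i j (n-1) + cntF n t i j n = cDl n t i (j+1) := by
      rw [show j+1 = n-1 by omega, cD_mid (Or.inl rfl),
        Icc_split (show i ≤ n-1 from hi2), Finset.sum_add_distrib]
      simp only [cntF, cntM, cntQ, cntS, cntR]
      split_ifs <;> first | (exfalso; omega) | ring1
    have hfork : (if 4 ≤ n then cntF n t i j (n-3) else 0) = cDl n t i (2*n-j) := by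
      rw [cD_gt (show n < 2*n-j by omega), show 2*n-1-(2*n-j) = j-1 by omega]
      by_cases h4 : 4 ≤ n
      · rw [if_pos h4]
        simp only [cntF, cntM, cntQ, cntS, cntR]
        rw [show (n-3:ℕ) = j-1 by omega, show 2*n-1-(j-1) = 2*n-j by omega]
        by_cases hb : n-i ≤ j-1
        · split_ifs <;> first | (exfalso; omega) | ring1
        · rw [hsupp i (2*n-j) (by omega)]
          split_ifs <;> first | (exfalso; omega) | ring1
      · rw [if_neg h4, hsupp i (2*n-j) (by omega),
          Finset.sum_eq_zero (fun k hk => ?_)]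
        · ring
        · simp only [mem_Icc] at hk
          rw [hsupp k (j-1) (by omega), hsupp k (2*n-j) (by omega)]; ring
    simp only [eD]
    rw [nbs_B hn hreg2, hA, hfork]
    linarith [hmid]

end Match

lemma cDl_eq : @cDl = @cD := rfl

section Chain

variable {n : ℕ} {lam : ℕ → ℤ} {t : ℕ → ℕ → ℤ}

lemma eD_le {c : ℕ → ℤ} (hn : 3 ≤ n) (hI : Inv n lam c) {s : ℕ}
    (hs1 : 1 ≤ s) (hsn : s ≤ n) : eD n lam c s ≤ SD n lam := by
  have hGa : Ga n (fun r => ind s s r) := by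
    by_cases h : s ≤ n-1
    · exact Or.inl ⟨s, s, hs1, le_rfl, h, rfl⟩
    · have hs : s = n := by omega
      exact Or.inr (Or.inl ⟨n-1, by omega, le_rfl,
        by funext r; simp only [ind]; split_ifs <;> omega⟩)
  have h0 := hI _ hGa
  have hp : pairD n lam c (fun r => ind s s r) = eD n lam c s := by
    unfold pairD
    have hpt : ∀ u ∈ Icc 1 n, ind s s u * eD n lam c u
        = (if u = s then eD n lam c u else 0) := by
      intro u _; simp only [ind]; split_ifs <;> first | ring1 | (exfalso; omega)
    rw [Finset.sum_congr rfl hpt, sum_single_point hs1 hsn]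
  linarith

lemma invS_all (hn : 3 ≤ n)
    (ht : ∀ i j, 0 ≤ t i j)
    (hsupp : ∀ i j, ¬(1 ≤ i ∧ i ≤ n - 1 ∧ n - i ≤ j ∧ j ≤ n - 1 + i) → t i j = 0)
    (hineq₂ : ∀ i j, 1 ≤ i → i ≤ n - 1 → n - i ≤ j → j < n - 1 →
      t i (2 * n - 1 - j) ≤ lam j + cD n t (i + 1) (j + 1) - 2 * cD n t (i + 1) j
        + cD n t i (2 * n - j))
    {i : ℕ} (hi1 : 1 ≤ i) (hi2 : i ≤ n-1)
    (hprev : Inv n lam (cntR n t (i+1))) :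
    ∀ j, n-i-1 ≤ j → j ≤ n-2 → Inv n lam (cntS n t i j) := by
  intro j hj1
  induction j, hj1 using Nat.le_induction with
  | base =>
    intro _
    apply inv_congr hn (fun r h1 h2 => ?_) hprev
    simp only [cntS]; split_ifs <;> omega
  | succ j hj ih =>
    intro hj2
    have hIj : Inv n lam (cntS n t i j) := ih (by omega)
    have hb : t i (2*n-1-(j+1)) ≤ eD n lam (cntS n t i j) (j+1) := by
      rw [matchS hn hi1 hi2 (by omega) (by omega) hsupp]
      simp only [cDl_eq]
      exact hineq₂ i (j+1) hi1 hi2 (by omega) (by omega)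
    have hstep := inv_step hn hIj (by omega : 1 ≤ j+1) (by omega : j+1 ≤ n) (ht i _) hb
    apply inv_congr hn (fun r h1 h2 => ?_) hstep
    by_cases hr : r = j+1
    · subst hr; simp only [cntS]; split_ifs <;> omega
    · simp only [cntS]; split_ifs <;> omega

lemma invQ_of (hn : 3 ≤ n)
    (ht : ∀ i j, 0 ≤ t i j)
    (hsupp : ∀ i j, ¬(1 ≤ i ∧ i ≤ n - 1 ∧ n - i ≤ j ∧ j ≤ n - 1 + i) → t i j = 0)
    (hineq₄ : ∀ i, 1 ≤ i → i ≤ n - 1 →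
      t i n ≤ lam n + cD n t i (n + 1)
        - 2 * (∑ k ∈ Icc (i + 1) (n - 1), t k n))
    {i : ℕ} (hi1 : 1 ≤ i) (hi2 : i ≤ n-1)
    (hS : Inv n lam (cntS n t i (n-2))) : Inv n lam (cntQ n t i) := by
  have hb : t i n ≤ eD n lam (cntS n t i (n-2)) n := by
    rw [matchQ hn hi1 hi2 hsupp]
    simp only [cDl_eq]
    exact hineq₄ i hi1 hi2
  have hstep := inv_step hn hS (by omega : 1 ≤ n) le_rfl (ht i n) hb
  exact inv_congr hn (fun r _ _ => rfl) hstep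

lemma invM_of (hn : 3 ≤ n)
    (ht : ∀ i j, 0 ≤ t i j)
    (hsupp : ∀ i j, ¬(1 ≤ i ∧ i ≤ n - 1 ∧ n - i ≤ j ∧ j ≤ n - 1 + i) → t i j = 0)
    (hineq₃ : ∀ i, 1 ≤ i → i ≤ n - 1 →
      t i (n - 1) ≤ lam (n - 1) + cD n t i (n + 1)
        - 2 * (∑ k ∈ Icc (i + 1) (n - 1), t k (n - 1)))
    {i : ℕ} (hi1 : 1 ≤ i) (hi2 : i ≤ n-1)
    (hQ : Inv n lam (cntQ n t i)) : Inv n lam (cntM n t i) := by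
  have hb : t i (n-1) ≤ eD n lam (cntQ n t i) (n-1) := by
    rw [matchM hn hi1 hi2 hsupp]
    simp only [cDl_eq]
    exact hineq₃ i hi1 hi2
  have hstep := inv_step hn hQ (by omega : 1 ≤ n-1) (by omega : n-1 ≤ n) (ht i _) hb
  exact inv_congr hn (fun r _ _ => rfl) hstep

lemma invF_all (hn : 3 ≤ n)
    (ht : ∀ i j, 0 ≤ t i j)
    (hsupp : ∀ i j, ¬(1 ≤ i ∧ i ≤ n - 1 ∧ n - i ≤ j ∧ j ≤ n - 1 + i) → t i j = 0)
    (hineq₁ : ∀ i j, 1 ≤ i → i ≤ n - 1 → n - i ≤ j → j < n - 1 →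
      t i j ≤ lam j + cD n t i (j + 1) - 2 * cD n t i (2 * n - 1 - j)
        + cD n t i (2 * n - j))
    {i : ℕ} (hi1 : 1 ≤ i) (hi2 : i ≤ n-1)
    (hM : Inv n lam (cntM n t i)) :
    ∀ d, d ≤ i-1 → Inv n lam (cntF n t i (n-2-d)) := by
  intro d
  induction d with
  | zero =>
    intro _
    apply inv_congr hn (fun r h1 h2 => ?_) hM
    simp only [cntF]; split_ifs <;> omega
  | succ d ih =>
    intro hd
    have hF : Inv n lam (cntF n t i (n-2-d)) := ih (by omega)
    have hb : t i (n-2-d) ≤ eD n lam (cntF n t i (n-2-d)) (n-2-d) := by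
      rw [matchF hn hi1 hi2 (by omega) (by omega) hsupp]
      simp only [cDl_eq]
      exact hineq₁ i (n-2-d) hi1 hi2 (by omega) (by omega)
    have hstep := inv_step hn hF (by omega : 1 ≤ n-2-d) (by omega : n-2-d ≤ n) (ht i _) hb
    apply inv_congr hn (fun r h1 h2 => ?_) hstep
    by_cases hr : r = n-2-d
    · subst hr; simp only [cntF]; split_ifs <;> omega
    · simp only [cntF]; split_ifs <;> omega

lemma invR_of (hn : 3 ≤ n)
    (hsupp : ∀ i j, ¬(1 ≤ i ∧ i ≤ n - 1 ∧ n - i ≤ j ∧ j ≤ n - 1 + i) → t i j = 0)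
    {i : ℕ} (hi1 : 1 ≤ i) (hi2 : i ≤ n-1)
    (hF : Inv n lam (cntF n t i (n-2-(i-1)))) : Inv n lam (cntR n t i) := by
  apply inv_congr hn (fun r h1 h2 => ?_) hF
  rcases (show (1 ≤ r ∧ r ≤ n-2) ∨ r = n-1 ∨ r = n by omega) with hr | hr | hr
  · simp only [cntF, cntM, cntQ, cntS, cntR]
    rw [if_pos hr, if_pos hr,
      Icc_split (show i ≤ n-1 from hi2) (fun k => t k r + t k (2*n-1-r))]
    by_cases hb : n-i ≤ r
    · split_ifs <;> first | (exfalso; omega) | ring1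
    · rw [hsupp i r (by omega), hsupp i (2*n-1-r) (by omega)]
      split_ifs <;> first | (exfalso; omega) | ring1
  · simp only [cntF, cntM, cntQ, cntS, cntR]
    rw [Icc_split (show i ≤ n-1 from hi2) (fun k => t k (n-1))]
    split_ifs <;> first | (exfalso; omega) | ring1
  · simp only [cntF, cntM, cntQ, cntS, cntR]
    rw [Icc_split (show i ≤ n-1 from hi2) (fun k => t k n)]
    split_ifs <;> first | (exfalso; omega) | ring1

lemma invR_all (hn : 3 ≤ n)
    (hlam : ∀ j, 1 ≤ j → j ≤ n → 0 ≤ lam j)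
    (ht : ∀ i j, 0 ≤ t i j)
    (hsupp : ∀ i j, ¬(1 ≤ i ∧ i ≤ n - 1 ∧ n - i ≤ j ∧ j ≤ n - 1 + i) → t i j = 0)
    (hineq₁ : ∀ i j, 1 ≤ i → i ≤ n - 1 → n - i ≤ j → j < n - 1 →
      t i j ≤ lam j + cD n t i (j + 1) - 2 * cD n t i (2 * n - 1 - j)
        + cD n t i (2 * n - j))
    (hineq₂ : ∀ i j, 1 ≤ i → i ≤ n - 1 → n - i ≤ j → j < n - 1 →
      t i (2 * n - 1 - j) ≤ lam j + cD n t (i + 1) (j + 1) - 2 * cD n t (i + 1) j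
        + cD n t i (2 * n - j))
    (hineq₃ : ∀ i, 1 ≤ i → i ≤ n - 1 →
      t i (n - 1) ≤ lam (n - 1) + cD n t i (n + 1)
        - 2 * (∑ k ∈ Icc (i + 1) (n - 1), t k (n - 1)))
    (hineq₄ : ∀ i, 1 ≤ i → i ≤ n - 1 →
      t i n ≤ lam n + cD n t i (n + 1)
        - 2 * (∑ k ∈ Icc (i + 1) (n - 1), t k n)) :
    ∀ d, d ≤ n-1 → Inv n lam (cntR n t (n-d)) := by
  intro d
  induction d with
  | zero =>
    intro _
    apply inv_congr hn (fun r h1 h2 => ?_) (inv_zero hn hlam)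
    simp only [cntR]
    rw [show Icc (n-0) (n-1) = (∅ : Finset ℕ) from Finset.Icc_eq_empty (by omega)]
    split_ifs <;> simp
  | succ d ih =>
    intro hd
    have hprev : Inv n lam (cntR n t ((n-(d+1))+1)) := by
      have h0 := ih (by omega)
      rwa [show n - d = (n-(d+1))+1 by omega] at h0
    have hi1 : 1 ≤ n-(d+1) := by omega
    have hi2 : n-(d+1) ≤ n-1 := by omega
    have hS := invS_all hn ht hsupp hineq₂ hi1 hi2 hprev (n-2) (by omega) (by omega)
    have hQ := invQ_of hn ht hsupp hineq₄ hi1 hi2 hS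
    have hM := invM_of hn ht hsupp hineq₃ hi1 hi2 hQ
    have hF := invF_all hn ht hsupp hineq₁ hi1 hi2 hM (n-(d+1)-1) le_rfl
    exact invR_of hn hsupp hi1 hi2 hF

end Chain

end AdaptedD

open AdaptedD in
/-- Type D_n case of Proposition 3.6: for a triangular array `t` in `S^λ`
(type D_n), `t_{1,n−1} + t_{1,n} + ∑_{i=2}^{n−1} t_{i,n−i}` is bounded by
`n * (2λ_1 + ⋯ + 2λ_{n−2} + λ_{n−1} + λ_n)`.  The functions
`c̃(t_{i,n−1}) = ∑_{k=i}^{n−1} t_{k,n−1}` and `c̃(t_{i,n}) = ∑_{k=i}^{n−1} t_{k,n}`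
are written out explicitly. -/
theorem adapted_string_leftmost_sum_bound_typeD
    (n : ℕ) (hn : 3 ≤ n) (lam : ℕ → ℤ) (t : ℕ → ℕ → ℤ)
    (hlam : ∀ j, 1 ≤ j → j ≤ n → 0 ≤ lam j)
    (ht : ∀ i j, 0 ≤ t i j)
    (hsupp : ∀ i j, ¬(1 ≤ i ∧ i ≤ n - 1 ∧ n - i ≤ j ∧ j ≤ n - 1 + i) → t i j = 0)
    (hmono₁ : ∀ i j, 1 ≤ i → i ≤ n - 1 → n - i ≤ j → j + 1 ≤ n - 2 →
      t i (j + 1) ≤ t i j)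
    (hmono₂ : ∀ i, 2 ≤ i → i ≤ n - 1 → t i (n - 1) ≤ t i (n - 2) ∧ t i n ≤ t i (n - 2))
    (hmono₃ : ∀ i, 2 ≤ i → i ≤ n - 1 → t i (n + 1) ≤ t i (n - 1) ∧ t i (n + 1) ≤ t i n)
    (hmono₄ : ∀ i j, 1 ≤ i → i ≤ n - 1 → n + 1 ≤ j → j + 1 ≤ n - 1 + i →
      t i (j + 1) ≤ t i j)
    (hineq₁ : ∀ i j, 1 ≤ i → i ≤ n - 1 → n - i ≤ j → j < n - 1 →
      t i j ≤ lam j + cD n t i (j + 1) - 2 * cD n t i (2 * n - 1 - j)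
        + cD n t i (2 * n - j))
    (hineq₂ : ∀ i j, 1 ≤ i → i ≤ n - 1 → n - i ≤ j → j < n - 1 →
      t i (2 * n - 1 - j) ≤ lam j + cD n t (i + 1) (j + 1) - 2 * cD n t (i + 1) j
        + cD n t i (2 * n - j))
    (hineq₃ : ∀ i, 1 ≤ i → i ≤ n - 1 →
      t i (n - 1) ≤ lam (n - 1) + cD n t i (n + 1)
        - 2 * (∑ k ∈ Icc (i + 1) (n - 1), t k (n - 1)))
    (hineq₄ : ∀ i, 1 ≤ i → i ≤ n - 1 →
      t i n ≤ lam n + cD n t i (n + 1)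
        - 2 * (∑ k ∈ Icc (i + 1) (n - 1), t k n)) :
    t 1 (n - 1) + t 1 n + (∑ i ∈ Icc 2 (n - 1), t i (n - i)) ≤
      (n : ℤ) * ((∑ j ∈ Icc 1 (n - 2), 2 * lam j) + lam (n - 1) + lam n) := by
  have hR : ∀ i, 1 ≤ i → i ≤ n → Inv n lam (cntR n t i) := by
    intro i h1 h2
    have h0 := invR_all hn hlam ht hsupp hineq₁ hineq₂ hineq₃ hineq₄ (n-i) (by omega)
    rwa [show n-(n-i) = i by omega] at h0
  have hS1 := invS_all hn ht hsupp hineq₂ (le_rfl : 1 ≤ 1) (by omega)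
    (hR (1+1) (by omega) (by omega)) (n-2) (by omega) (by omega)
  have hQ1 := invQ_of hn ht hsupp hineq₄ (le_rfl : 1 ≤ 1) (by omega) hS1
  have hb2 : t 1 n ≤ SD n lam := by
    have hb := hineq₄ 1 (by omega) (by omega)
    have heD := eD_le hn hS1 (by omega : 1 ≤ n) le_rfl
    rw [matchQ hn (le_rfl : 1 ≤ 1) (by omega) hsupp] at heD
    simp only [cDl_eq] at heD
    linarith
  have hb1 : t 1 (n-1) ≤ SD n lam := by
    have hb := hineq₃ 1 (by omega) (by omega)
    have heD := eD_le hn hQ1 (by omega : 1 ≤ n-1) (by omega)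
    rw [matchM hn (le_rfl : 1 ≤ 1) (by omega) hsupp] at heD
    simp only [cDl_eq] at heD
    linarith
  have hb3 : ∀ i, 2 ≤ i → i ≤ n-1 → t i (n-i) ≤ SD n lam := by
    intro i h1 h2
    have hS := invS_all hn ht hsupp hineq₂ (by omega) h2
      (hR (i+1) (by omega) (by omega)) (n-2) (by omega) (by omega)
    have hQ := invQ_of hn ht hsupp hineq₄ (by omega) h2 hS
    have hM := invM_of hn ht hsupp hineq₃ (by omega) h2 hQ
    have hF := invF_all hn ht hsupp hineq₁ (by omega) h2 hM (i-2) (by omega)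
    have hFi : Inv n lam (cntF n t i (n-i)) := by
      rw [show n-i = n-2-(i-2) by omega]; exact hF
    have heD := eD_le hn hFi (by omega : 1 ≤ n-i) (by omega)
    rw [matchF hn (by omega) h2 le_rfl (by omega) hsupp] at heD
    simp only [cDl_eq] at heD
    have hb := hineq₁ i (n-i) (by omega) h2 le_rfl (by omega)
    linarith
  have hsum : ∑ i ∈ Icc 2 (n-1), t i (n-i) ≤ ((n:ℤ)-2) * SD n lam := by
    have h0 : ∑ i ∈ Icc 2 (n-1), t i (n-i) ≤ ∑ i ∈ Icc 2 (n-1), SD n lam :=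
      Finset.sum_le_sum (fun i hi => by
        simp only [mem_Icc] at hi; exact hb3 i hi.1 hi.2)
    rw [Finset.sum_const, nsmul_eq_mul] at h0
    have hcard : ((Icc 2 (n-1)).card : ℤ) = (n:ℤ) - 2 := by
      rw [Nat.card_Icc]; omega
    rwa [hcard] at h0
  have hring : ((n:ℤ)-2) * SD n lam + 2 * SD n lam = (n:ℤ) * SD n lam := by ring
  have hgoal : SD n lam = (∑ j ∈ Icc 1 (n-2), 2 * lam j) + lam (n-1) + lam n := rfl
  rw [← hgoal]
  linarith
end

section
/- Let n ≥ 2 and let λ_1, …, λ_n and t_1, …, t_{2n−1} be nonnegative integers (with the convention t_j = 0 for j outside {1, …, 2n−1}) satisfying, as inequalities in ℤ: (i) t_j ≤ λ_j + t_{j+1} + t_{2n−1−j} − 2t_{2n−j} + t_{2n+1−j} for all 1 ≤ j ≤ n−2; (ii) t_{n−1} ≤ λ_{n−1} + t_n − 2t_{n+1} + t_{n+2}; (iii) t_n ≤ λ_n + 2t_{n+1}; and (iv) t_{2n−j} ≤ λ_j + t_{2n+1−j} for all 1 ≤ j ≤ n−1. Then t_1 ≤ 2λ_1 + 2λ_2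 + ⋯ + 2λ_{n−1} + λ_n. -/
open Finset

/-- Type B_n case of inequality (3.2) of the paper: if nonnegative integers
`t_1, …, t_{2n−1}` (zero outside that range) satisfy the conditions of
Littelmann's description of `S^λ` on the bottom block, then
`t_1 ≤ 2λ_1 + ⋯ + 2λ_{n−1} + λ_n`. -/
theorem bottom_row_bound_typeB
    (n : ℕ) (hn : 2 ≤ n) (lam t : ℕ → ℤ)
    (hlam : ∀ j, 1 ≤ j → j ≤ n → 0 ≤ lam j)
    (ht : ∀ j, 0 ≤ t j)
    (hzero : ∀ j, j = 0 ∨ 2 * n - 1 < j → t j = 0)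
    (h1 : ∀ j, 1 ≤ j → j ≤ n - 2 →
      t j ≤ lam j + t (j + 1) + t (2 * n - 1 - j) - 2 * t (2 * n - j)
        + t (2 * n + 1 - j))
    (h2 : t (n - 1) ≤ lam (n - 1) + t n - 2 * t (n + 1) + t (n + 2))
    (h3 : t n ≤ lam n + 2 * t (n + 1))
    (h4 : ∀ j, 1 ≤ j → j ≤ n - 1 → t (2 * n - j) ≤ lam j + t (2 * n + 1 - j)) :
    t 1 ≤ (∑ j ∈ Icc 1 (n - 1), 2 * lam j) + lam n := by
  have ht2n : t (2 * n) = 0 := hzero _ (Or.inr (by omega))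
  -- Lemma B : t (2n - k) ≤ λ_1 + ⋯ + λ_k for k ≤ n - 1
  have hB : ∀ k, k ≤ n - 1 → t (2 * n - k) ≤ ∑ j ∈ Icc 1 k, lam j := by
    intro k
    induction k with
    | zero =>
      intro _
      simp only [Nat.sub_zero, Finset.Icc_eq_empty_of_lt (by norm_num : (1:ℕ) > 0),
        Finset.sum_empty]
      omega
    | succ k ih =>
      intro hk
      have hrec := h4 (k + 1) (by omega) hk
      have e : 2 * n + 1 - (k + 1) = 2 * n - k := by omega
      rw [e] at hrec
      have esum : Icc 1 (k + 1) = insert (k + 1) (Icc 1 k) := by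
        ext x; simp [Finset.mem_Icc]; omega
      have hnotmem : k + 1 ∉ Icc 1 k := by simp
      rw [esum, Finset.sum_insert hnotmem]
      have := ih (by omega)
      linarith
  -- Lemma Q : downward induction on j
  have hQ : ∀ d j, 1 ≤ j → j ≤ n - 1 → n - 1 - j ≤ d →
      t j + t (2 * n - j) - t (2 * n + 1 - j) - t (n + 1)
        ≤ (∑ i ∈ Icc j (n - 1), lam i) + lam n := by
    intro d
    induction d with
    | zero =>
      intro j hj1 hj2 hj3
      have hj : j = n - 1 := by omega
      subst hj
      have e1 : 2 * n - (n - 1) = n + 1 := by omega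
      have e2 : 2 * n + 1 - (n - 1) = n + 2 := by omega
      rw [e1, e2, Finset.Icc_self, Finset.sum_singleton]
      linarith [ht (n + 1)]
    | succ d ih =>
      intro j hj1 hj2 hj3
      by_cases hj : j = n - 1
      · subst hj
        have e1 : 2 * n - (n - 1) = n + 1 := by omega
        have e2 : 2 * n + 1 - (n - 1) = n + 2 := by omega
        rw [e1, e2, Finset.Icc_self, Finset.sum_singleton]
        linarith [ht (n + 1)]
      · have hj2' : j ≤ n - 2 := by omega
        have hih := ih (j + 1) (by omega) (by omega) (by omega)
        have hh := h1 j hj1 hj2'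
        have e1 : 2 * n - (j + 1) = 2 * n - 1 - j := by omega
        have e2 : 2 * n + 1 - (j + 1) = 2 * n - j := by omega
        rw [e1, e2] at hih
        have esum : Icc j (n - 1) = insert j (Icc (j + 1) (n - 1)) := by
          ext x; simp [Finset.mem_Icc]; omega
        have hnotmem : j ∉ Icc (j + 1) (n - 1) := by simp
        rw [esum, Finset.sum_insert hnotmem]
        linarith
  have hfin := hQ (n - 1) 1 le_rfl (by omega) (by omega)
  have e3 : 2 * n + 1 - 1 = 2 * n := by omega
  rw [e3, ht2n] at hfin
  have hB' := hB (n - 1) le_rfl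
  have e4 : 2 * n - (n - 1) = n + 1 := by omega
  rw [e4] at hB'
  have hm : ∑ j ∈ Icc 1 (n - 1), 2 * lam j = 2 * ∑ j ∈ Icc 1 (n - 1), lam j := by
    rw [Finset.mul_sum]
  rw [hm]
  linarith [ht (2 * n - 1)]
end

section
/- Let n ≥ 2 and let λ_1, …, λ_n and t_1, …, t_{2n−1} be nonnegative integers (with the convention t_j = 0 for j outside {1, …, 2n−1}) satisfying, as inequalities in ℤ: (i) t_j ≤ λ_j + t_{j+1} + t_{2n−1−j} − 2t_{2n−j} + t_{2n+1−j} for all 1 ≤ j ≤ n−2; (ii) t_{n−1} ≤ λ_{n−1} + 2t_n − 2t_{n+1} + t_{n+2}; (iii) t_n ≤ λ_n + t_{n+1}; and (iv) t_{2n−j} ≤ λ_j + t_{2n+1−j} for all 1 ≤ j ≤ n−1. Then t_1 ≤ 2(λ_1 + λ_2 + ⋯ + λ_n). -/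
open Finset

private lemma sum_Icc_eq_left (f : ℕ → ℤ) {a b : ℕ} (h : a ≤ b) :
    ∑ i ∈ Icc a b, f i = f a + ∑ i ∈ Icc (a + 1) b, f i := by
  rw [Finset.Icc_eq_cons_Ioc h, Finset.sum_cons, Finset.Icc_add_one_left_eq_Ioc]

/-- Type C_n case of inequality (3.2) of the paper: if nonnegative integers
`t_1, …, t_{2n−1}` (zero outside that range) satisfy the conditions of
Littelmann's description of `S^λ` on the bottom block, then
`t_1 ≤ 2(λ_1 + ⋯ + λ_n)`. -/
theorem bottom_row_bound_typeC
    (n : ℕ) (hn : 2 ≤ n) (lam t : ℕ → ℤ)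
    (hlam : ∀ j, 1 ≤ j → j ≤ n → 0 ≤ lam j)
    (ht : ∀ j, 0 ≤ t j)
    (hzero : ∀ j, j = 0 ∨ 2 * n - 1 < j → t j = 0)
    (h1 : ∀ j, 1 ≤ j → j ≤ n - 2 →
      t j ≤ lam j + t (j + 1) + t (2 * n - 1 - j) - 2 * t (2 * n - j)
        + t (2 * n + 1 - j))
    (h2 : t (n - 1) ≤ lam (n - 1) + 2 * t n - 2 * t (n + 1) + t (n + 2))
    (h3 : t n ≤ lam n + t (n + 1))
    (h4 : ∀ j, 1 ≤ j → j ≤ n - 1 → t (2 * n - j) ≤ lam j + t (2 * n + 1 - j)) :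
    t 1 ≤ 2 * ∑ j ∈ Icc 1 n, lam j := by
  have key : ∀ k, k ≤ n - 1 → t (n - k) + t (n + k) - 2 * t (n + k + 1)
      ≤ 2 * ∑ j ∈ Icc (n - k) n, lam j := by
    intro k
    induction k with
    | zero =>
      intro _
      simp only [Nat.sub_zero, Nat.add_zero, Icc_self, sum_singleton]
      linarith
    | succ k ih =>
      intro hk
      have hsum : ∑ j ∈ Icc (n - (k + 1)) n, lam j
          = lam (n - (k + 1)) + ∑ j ∈ Icc (n - k) n, lam j := by
        have e : n - (k + 1) + 1 = n - k := by omega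
        rw [sum_Icc_eq_left lam (by omega : n - (k + 1) ≤ n), e]
      rcases Nat.eq_zero_or_pos k with hk0 | hk1
      · subst hk0
        have h4' := h4 (n - 1) (by omega) (by omega)
        have e1 : 2 * n - (n - 1) = n + 1 := by omega
        have e2 : 2 * n + 1 - (n - 1) = n + 2 := by omega
        rw [e1, e2] at h4'
        have g1 : n - (0 + 1) = n - 1 := by omega
        have g2 : n + (0 + 1) = n + 1 := by omega
        have g3 : n + (0 + 1) + 1 = n + 2 := by omega
        rw [g1] at hsum ⊢
        rw [g2, g3, hsum, Nat.sub_zero, Icc_self, sum_singleton]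
        linarith
      · have ih' := ih (by omega)
        have h1' := h1 (n - (k + 1)) (by omega) (by omega)
        have h4' := h4 (n - (k + 1)) (by omega) (by omega)
        have e1 : n - (k + 1) + 1 = n - k := by omega
        have e2 : 2 * n - 1 - (n - (k + 1)) = n + k := by omega
        have e3 : 2 * n - (n - (k + 1)) = n + k + 1 := by omega
        have e4 : 2 * n + 1 - (n - (k + 1)) = n + k + 2 := by omega
        rw [e1, e2, e3, e4] at h1'
        rw [e3, e4] at h4'
        rw [hsum]
        have : n + (k + 1) = n + k + 1 := by omega
        rw [this]
        have : n + k + 1 + 1 = n + k + 2 := by omega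
        rw [this]
        linarith
  have hfin := key (n - 1) le_rfl
  have e1 : n - (n - 1) = 1 := by omega
  have e2 : n + (n - 1) = 2 * n - 1 := by omega
  have e3 : 2 * n - 1 + 1 = 2 * n := by omega
  rw [e1, e2, e3] at hfin
  have hz : t (2 * n) = 0 := hzero _ (Or.inr (by omega))
  have := ht (2 * n - 1)
  linarith
end

section
/- Let n ≥ 3 and let λ_1, …, λ_n and t_1, …, t_{2n−2} be nonnegative integers (with the convention t_j = 0 for j outside {1, …, 2n−2}) satisfying, as inequalities in ℤ: (i) t_j ≤ λ_j + t_{j+1} + t_{2n−2−j} − 2t_{2n−1−j} + t_{2n−j} for all 1 ≤ j ≤ n−3; (ii) t_{n−2} ≤ λ_{n−2} + t_{n−1} + t_n − 2t_{n+1} + t_{n+2}; (iii) t_{n−1} ≤ λ_{n−1} + t_{n+1} and t_n ≤ λ_n + t_{n+1}; and (iv) t_{2n−1−j} ≤ λ_j + t_{2n−j} for all 1 ≤ j ≤ n−2. Then t_1 ≤ 2λ_1 + 2λ_2 + ⋯ + 2λ_{n−2} + λ_{n−1} + λ_n. -/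
open Finset

/-- Type D_n case of inequality (3.2) of the paper: if nonnegative integers
`t_1, …, t_{2n−2}` (zero outside that range) satisfy the conditions of
Littelmann's description of `S^λ` on the bottom block, then
`t_1 ≤ 2λ_1 + ⋯ + 2λ_{n−2} + λ_{n−1} + λ_n`. -/
theorem bottom_row_bound_typeD
    (n : ℕ) (hn : 3 ≤ n) (lam t : ℕ → ℤ)
    (hlam : ∀ j, 1 ≤ j → j ≤ n → 0 ≤ lam j)
    (ht : ∀ j, 0 ≤ t j)
    (hzero : ∀ j, j = 0 ∨ 2 * n - 2 < j → t j = 0)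
    (h1 : ∀ j, 1 ≤ j → j ≤ n - 3 →
      t j ≤ lam j + t (j + 1) + t (2 * n - 2 - j) - 2 * t (2 * n - 1 - j)
        + t (2 * n - j))
    (h2 : t (n - 2) ≤ lam (n - 2) + t (n - 1) + t n - 2 * t (n + 1) + t (n + 2))
    (h3 : t (n - 1) ≤ lam (n - 1) + t (n + 1))
    (h3' : t n ≤ lam n + t (n + 1))
    (h4 : ∀ j, 1 ≤ j → j ≤ n - 2 → t (2 * n - 1 - j) ≤ lam j + t (2 * n - j)) :
    t 1 ≤ (∑ j ∈ Icc 1 (n - 2), 2 * lam j) + lam (n - 1) + lam n := by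
  have key : ∀ k, k ≤ n - 3 →
      t (n - 2 - k) + t (n + 1 + k) - 2 * t (n + 2 + k) ≤
        (∑ i ∈ Icc (n - 2 - k) (n - 2), 2 * lam i) + lam (n - 1) + lam n := by
    intro k
    induction k with
    | zero =>
      intro _
      have h4' := h4 (n - 2) (by omega) le_rfl
      have e1 : 2 * n - 1 - (n - 2) = n + 1 := by omega
      have e2 : 2 * n - (n - 2) = n + 2 := by omega
      rw [e1, e2] at h4'
      have hsum : (∑ i ∈ Icc (n - 2 - 0) (n - 2), 2 * lam i) = 2 * lam (n - 2) := by
        simp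
      rw [hsum]
      simp only [Nat.sub_zero, Nat.add_zero]
      linarith
    | succ k ih =>
      intro hk
      have hk' : k ≤ n - 3 := by omega
      have ih' := ih hk'
      have e0 : n - 2 - (k + 1) = n - 3 - k := by omega
      have hj1 : 1 ≤ n - 3 - k := by omega
      have hj2 : n - 3 - k ≤ n - 3 := by omega
      have h1' := h1 (n - 3 - k) hj1 hj2
      have h4' := h4 (n - 3 - k) hj1 (by omega)
      have e1 : n - 3 - k + 1 = n - 2 - k := by omega
      have e2 : 2 * n - 2 - (n - 3 - k) = n + 1 + k := by omega
      have e3 : 2 * n - 1 - (n - 3 - k) = n + 2 + k := by omega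
      have e4 : 2 * n - (n - 3 - k) = n + 3 + k := by omega
      rw [e1, e2, e3, e4] at h1'
      rw [e3, e4] at h4'
      have hset : Icc (n - 3 - k) (n - 2) = insert (n - 3 - k) (Icc (n - 2 - k) (n - 2)) := by
        ext x
        simp only [mem_Icc, mem_insert]
        omega
      have hnotmem : n - 3 - k ∉ Icc (n - 2 - k) (n - 2) := by
        simp only [mem_Icc]
        omega
      have hsum : (∑ i ∈ Icc (n - 3 - k) (n - 2), 2 * lam i)
          = 2 * lam (n - 3 - k) + ∑ i ∈ Icc (n - 2 - k) (n - 2), 2 * lam i := by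
        rw [hset, Finset.sum_insert hnotmem]
      rw [e0]
      have e5 : n + 1 + (k + 1) = n + 2 + k := by omega
      have e6 : n + 2 + (k + 1) = n + 3 + k := by omega
      rw [e5, e6, hsum]
      linarith
  have hfin := key (n - 3) (le_rfl)
  have e1 : n - 2 - (n - 3) = 1 := by omega
  have e2 : n + 1 + (n - 3) = 2 * n - 2 := by omega
  have e3 : n + 2 + (n - 3) = 2 * n - 1 := by omega
  rw [e1, e2, e3] at hfin
  have hz : t (2 * n - 1) = 0 := hzero _ (Or.inr (by omega))
  have hnn := ht (2 * n - 2)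
  linarith
end
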